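/- arXiv:1012.0053 — 12 statements merged into one kernel-verified Lean document; each statement's English description precedes it below -/
import Mathlib

section
/- If f belongs to AP(ℝ) (the sup-norm closure of the ℂ-linear span of the characters x ↦ exp(iξx), ξ ∈ ℝ, inside the bounded continuous complex-valued functions on ℝ) and f(x) → 0 as |x| → ∞, then f is identically zero. -/
/-- The character `x ↦ exp(i ξ x)` as a bounded continuous function on `ℝ`. -/
noncomputable def charFn (ξ : ℝ) : BoundedContinuousFunction ℝ ℂ :=
  BoundedContinuousFunction.ofNormedAddCommGroup
    (fun x : ℝ => Complex.exp ((ξ * x : ℝ) * Complex.I))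
    (by continuity) 1
    (fun x => le_of_eq (Complex.norm_exp_ofReal_mul_I (ξ * x)))

/-- `AP(ℝ)`: the sup-norm closure, inside `C_b(ℝ, ℂ)`, of the `ℂ`-linear span of the
characters `x ↦ exp(i ξ x)`. -/
noncomputable def APset : Set (BoundedContinuousFunction ℝ ℂ) :=
  closure ((Submodule.span ℂ (Set.range charFn) : Submodule ℂ (BoundedContinuousFunction ℝ ℂ)) :
    Set (BoundedContinuousFunction ℝ ℂ))

/-- `f(x) → 0` as `|x| → ∞`. -/
def VanishesAtInfty (f : BoundedContinuousFunction ℝ ℂ) : Prop :=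
  Filter.Tendsto (fun x => f x) (Filter.cocompact ℝ) (nhds 0)

/-!
Every trigonometric polynomial `p` has arbitrarily large `ε`-almost periods `τ`, i.e.
`|p (x + τ) - p x| ≤ ε` for all `x`: the finitely many phases `exp (i ξ n)` return
simultaneously close to `1` for infinitely many `n ∈ ℕ`, by compactness of the torus.
This property passes to uniform limits, so every `f ∈ AP(ℝ)` has it. If moreover `f → 0`
at infinity, then `|f x| ≤ |f (x + τ)| + ε` with `τ` large gives `|f x| ≤ 2 ε`.
-/

open Filter Topology BoundedContinuousFunction

section CompactGroup

variable {G : Type*} [Group G] [TopologicalSpace G] [IsTopologicalGroup G] [CompactSpace G]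

theorem frequently_pow_mem_nhds_one (g : G) {U : Set G} (hU : U ∈ 𝓝 1) :
    ∃ᶠ n : ℕ in atTop, g ^ n ∈ U := by
  obtain ⟨V, hV, hVU⟩ := exists_nhds_split_inv hU
  obtain ⟨a, -, ha⟩ := isCompact_univ.exists_mapClusterPt (f := atTop) (u := (g ^ ·))
    (by simp)
  have hW : (· * a⁻¹) ⁻¹' V ∈ 𝓝 a := nhds_translation_mul_inv a ▸ preimage_mem_comap hV
  have hfreq := frequently_atTop.mp (mapClusterPt_iff_frequently.mp ha _ hW)
  refine frequently_atTop.mpr fun N => ?_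
  obtain ⟨m, -, hm⟩ := hfreq 0
  obtain ⟨n, hmn, hn⟩ := hfreq (m + N)
  refine ⟨n - m, by omega, ?_⟩
  -- `g ^ (n - m)` is the quotient of two powers that lie in the same neighbourhood of `a`
  have := hVU _ hn _ hm
  rwa [mul_div_mul_right_eq_div, div_eq_mul_inv, ← pow_sub _ (by omega)] at this

end CompactGroup

section AlmostPeriod

variable {α : Type*} [PseudoMetricSpace α]

def IsAlmostPeriod (ε : ℝ) (g : ℝ → α) (τ : ℝ) : Prop :=
  ∀ x, dist (g (x + τ)) (g x) ≤ ε

def HasUnboundedAlmostPeriods (g : ℝ → α) : Prop :=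
  ∀ ε > 0, ∃ᶠ τ in atTop, IsAlmostPeriod ε g τ

theorem IsAlmostPeriod.of_dist_le {ε η τ : ℝ} {f g : ℝ → α} (hg : IsAlmostPeriod ε g τ)
    (hfg : ∀ x, dist (f x) (g x) ≤ η) : IsAlmostPeriod (ε + 2 * η) f τ := fun x =>
  calc dist (f (x + τ)) (f x)
      ≤ dist (f (x + τ)) (g (x + τ)) + dist (g (x + τ)) (g x) + dist (g x) (f x) :=
        dist_triangle4 _ _ _ _
    _ ≤ η + ε + η := add_le_add_three (hfg _) (hg x) (dist_comm (g x) (f x) ▸ hfg x)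
    _ = ε + 2 * η := by ring

theorem HasUnboundedAlmostPeriods.of_mem_closure {S : Set (ℝ →ᵇ α)} {f : ℝ →ᵇ α}
    (hf : f ∈ closure S) (hS : ∀ p ∈ S, HasUnboundedAlmostPeriods p) :
    HasUnboundedAlmostPeriods f := by
  intro ε hε
  obtain ⟨p, hpS, hfp⟩ := Metric.mem_closure_iff.mp hf (ε / 3) (by positivity)
  refine (hS p hpS (ε / 3) (by positivity)).mono fun τ hτ => ?_
  have := hτ.of_dist_le fun x => (BoundedContinuousFunction.dist_coe_le_dist x).trans hfp.le
  rwa [show ε / 3 + 2 * (ε / 3) = ε by ring] at this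

theorem HasUnboundedAlmostPeriods.eq_of_tendsto {β : Type*} [MetricSpace β] {g : ℝ → β} {a : β}
    (hg : HasUnboundedAlmostPeriods g) (hlim : Tendsto g atTop (𝓝 a)) (x : ℝ) : g x = a := by
  refine eq_of_forall_dist_le fun ε hε => ?_
  have hnear : ∀ᶠ τ in atTop, dist (g (x + τ)) a ≤ ε / 2 :=
    (tendsto_atTop_add_const_left atTop x tendsto_id).eventually
      (hlim.eventually (Metric.closedBall_mem_nhds a (by positivity)))
  obtain ⟨τ, hτ, hτa⟩ := ((hg (ε / 2) (by positivity)).and_eventually hnear).exists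
  calc dist (g x) a ≤ dist (g (x + τ)) (g x) + dist (g (x + τ)) a := dist_triangle_left _ _ _
    _ ≤ ε / 2 + ε / 2 := add_le_add (hτ x) hτa
    _ = ε := add_halves ε

end AlmostPeriod

noncomputable def torusOrbit (τ : ℝ) : ℝ → Circle := fun ξ => Circle.exp (τ * ξ)

theorem torusOrbit_natCast (n : ℕ) : torusOrbit n = torusOrbit 1 ^ n := by
  ext1 ξ
  simp [torusOrbit]

theorem charFn_add (ξ x τ : ℝ) : charFn ξ (x + τ) = (torusOrbit τ ξ : ℂ) * charFn ξ x := by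
  simp only [charFn, torusOrbit, BoundedContinuousFunction.coe_ofNormedAddCommGroup,
    Circle.coe_exp, ← Complex.exp_add]
  congr 1
  push_cast
  ring

theorem exists_continuous_torus_extension {p : ℝ →ᵇ ℂ}
    (hp : p ∈ Submodule.span ℂ (Set.range charFn)) :
    ∃ P : (ℝ → Circle) → (ℝ →ᵇ ℂ), Continuous P ∧ P 1 = p ∧
      ∀ τ x, P (torusOrbit τ) x = p (x + τ) := by
  induction hp using Submodule.span_induction with
  | mem _ hq =>
    obtain ⟨ξ, rfl⟩ := hq
    refine ⟨fun h => (h ξ : ℂ) • charFn ξ, by fun_prop, by simp, fun τ x => ?_⟩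
    simp [charFn_add]
  | zero => exact ⟨0, continuous_const, rfl, fun _ _ => rfl⟩
  | add q r _ _ hq hr =>
    obtain ⟨Q, hQc, hQ1, hQ⟩ := hq
    obtain ⟨R, hRc, hR1, hR⟩ := hr
    exact ⟨Q + R, hQc.add hRc, by simp [hQ1, hR1], fun τ x => by simp [hQ, hR]⟩
  | smul c q _ hq =>
    obtain ⟨Q, hQc, hQ1, hQ⟩ := hq
    exact ⟨c • Q, hQc.const_smul c, by simp [hQ1], fun τ x => by simp [hQ]⟩

theorem hasUnboundedAlmostPeriods_of_mem_span {p : ℝ →ᵇ ℂ}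
    (hp : p ∈ Submodule.span ℂ (Set.range charFn)) : HasUnboundedAlmostPeriods p := by
  intro ε hε
  obtain ⟨P, hPc, hP1, hP⟩ := exists_continuous_torus_extension hp
  have hU : P ⁻¹' Metric.ball p ε ∈ 𝓝 1 :=
    hPc.continuousAt.preimage_mem_nhds (hP1 ▸ Metric.ball_mem_nhds _ hε)
  have hrec : ∃ᶠ n : ℕ in atTop, torusOrbit n ∈ P ⁻¹' Metric.ball p ε := by
    simpa only [torusOrbit_natCast] using frequently_pow_mem_nhds_one (torusOrbit 1) hU
  refine (tendsto_natCast_atTop_atTop.frequently (p := (torusOrbit · ∈ P ⁻¹' Metric.ball p ε))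
    hrec).mono fun τ hτ x => ?_
  rw [← hP]
  exact (BoundedContinuousFunction.dist_coe_le_dist x).trans (le_of_lt hτ)

/-- An almost periodic function which vanishes at infinity is identically zero. -/
theorem ap_vanishing_at_infty_eq_zero (f : BoundedContinuousFunction ℝ ℂ)
    (hf : f ∈ APset) (h0 : VanishesAtInfty f) : f = 0 := by
  have hper : HasUnboundedAlmostPeriods f :=
    .of_mem_closure hf fun _ hp => hasUnboundedAlmostPeriods_of_mem_span hp
  ext x
  exact hper.eq_of_tendsto (h0.mono_left atTop_le_cocompact) x
end

section
/- The decomposition of an asymptotically almost periodic function is unique: if a_1 + b_1 = a_2 + b_2 with a_1, a_2 ∈ AP(ℝ) and b_1, b_2 ∈ C₀(ℝ,ℂ), then a_1 = a_2 and b_1 = b_2. -/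
/-!
A trigonometric polynomial has arbitrarily large `ε`-almost periods: by compactness of the
torus, the points `(exp (i ξ n))_ξ`, `n ∈ ℕ`, come `δ`-close for indices `m`, `n` arbitrarily far
apart, and `n - m` is then a common almost period of all the characters involved. This property
survives uniform limits, so every almost periodic function has it. An almost periodic `f` with
`f → 0` at `+∞` therefore vanishes: `f x` is close to `f (x + t)` for arbitrarily large `t`.
Apply this to `a₁ - a₂ = b₂ - b₁`.
-/

open Filter Topology Submodule Set

lemma IsCompact.exists_dist_lt_of_forall_mem {X : Type*} [PseudoMetricSpace X] {K : Set X}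
    (hK : IsCompact K) {u : ℕ → X} (hu : ∀ n, u n ∈ K) {δ : ℝ} (hδ : 0 < δ) (N : ℕ) :
    ∃ m n, m + N ≤ n ∧ dist (u n) (u m) < δ := by
  obtain ⟨_, -, φ, hφ, hlim⟩ := hK.tendsto_subseq hu
  obtain ⟨k, hk⟩ := Metric.cauchySeq_iff'.mp hlim.cauchySeq δ hδ
  exact ⟨φ k, φ (N + k), by simpa [add_comm] using hφ.add_le_nat N k, hk _ (Nat.le_add_left k N)⟩

lemma charFn_apply (ξ x : ℝ) : charFn ξ x = Complex.exp ((ξ * x : ℝ) * Complex.I) := rfl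

lemma norm_charFn_apply (ξ x : ℝ) : ‖charFn ξ x‖ = 1 := Complex.norm_exp_ofReal_mul_I _

lemma charFn_add_apply (ξ x t : ℝ) : charFn ξ (x + t) = charFn ξ x * charFn ξ t := by
  simp only [charFn_apply, ← Complex.exp_add]
  push_cast
  ring_nf

lemma norm_charFn_add_sub (ξ x t : ℝ) :
    ‖charFn ξ (x + t) - charFn ξ x‖ = ‖charFn ξ t - 1‖ := by
  rw [charFn_add_apply, ← mul_sub_one, norm_mul, norm_charFn_apply, one_mul]

lemma exists_ge_forall_norm_charFn_sub_one_lt (s : Finset ℝ) {δ : ℝ} (hδ : 0 < δ) (N : ℝ) :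
    ∃ t ≥ N, ∀ ξ ∈ s, ‖charFn ξ t - 1‖ < δ := by
  let u : ℕ → (s → ℂ) := fun n ξ => charFn ξ n
  have hu : ∀ n, u n ∈ Metric.closedBall 0 1 := fun n => by
    rw [mem_closedBall_zero_iff]
    exact (pi_norm_le_iff_of_nonneg zero_le_one).2 fun ξ => (norm_charFn_apply ξ n).le
  obtain ⟨m, n, hmn, hdist⟩ :=
    (isCompact_closedBall 0 1).exists_dist_lt_of_forall_mem hu hδ ⌈N⌉₊
  refine ⟨n - m, ?_, fun ξ hξ => ?_⟩
  · have : (m : ℝ) + ⌈N⌉₊ ≤ n := by exact_mod_cast hmn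
    linarith [Nat.le_ceil N]
  · rw [← norm_charFn_add_sub ξ m, add_sub_cancel, ← dist_eq_norm]
    exact (dist_le_pi_dist (u n) (u m) ⟨ξ, hξ⟩).trans_lt hdist

def HasArbitrarilyLargeAlmostPeriods {E : Type*} [SeminormedAddCommGroup E] (f : ℝ → E) : Prop :=
  ∀ ε > 0, ∀ N : ℝ, ∃ t ≥ N, ∀ x, ‖f (x + t) - f x‖ ≤ ε

lemma hasArbitrarilyLargeAlmostPeriods_of_mem_span {p : BoundedContinuousFunction ℝ ℂ}
    (hp : p ∈ span ℂ (range charFn)) : HasArbitrarilyLargeAlmostPeriods p := by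
  intro ε hε N
  obtain ⟨c, rfl⟩ := Finsupp.mem_span_range_iff_exists_finsupp.mp hp
  set S := ∑ ξ ∈ c.support, ‖c ξ‖
  have hS : 0 ≤ S := Finset.sum_nonneg fun _ _ => norm_nonneg _
  obtain ⟨t, htN, ht⟩ :=
    exists_ge_forall_norm_charFn_sub_one_lt c.support (δ := ε / (S + 1)) (by positivity) N
  refine ⟨t, htN, fun x => ?_⟩
  calc ‖(c.sum fun ξ a => a • charFn ξ) (x + t) - (c.sum fun ξ a => a • charFn ξ) x‖
      = ‖∑ ξ ∈ c.support, c ξ * (charFn ξ (x + t) - charFn ξ x)‖ := by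
        simp [Finsupp.sum, mul_sub, Finset.sum_sub_distrib]
    _ ≤ ∑ ξ ∈ c.support, ‖c ξ‖ * (ε / (S + 1)) := by
        refine norm_sum_le_of_le _ fun ξ hξ => ?_
        rw [norm_mul, norm_charFn_add_sub]
        gcongr
        exact (ht ξ hξ).le
    _ = ε * (S / (S + 1)) := by rw [← Finset.sum_mul, mul_div_left_comm]
    _ ≤ ε := mul_le_of_le_one_right hε.le ((div_le_one (by positivity)).2 (by linarith))

lemma HasArbitrarilyLargeAlmostPeriods.of_mem_closure {E : Type*} [SeminormedAddCommGroup E]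
    {f : BoundedContinuousFunction ℝ E}
    (hf : f ∈ closure {g : BoundedContinuousFunction ℝ E | HasArbitrarilyLargeAlmostPeriods g}) :
    HasArbitrarilyLargeAlmostPeriods f := by
  intro ε hε N
  obtain ⟨g, hg, hfg⟩ := Metric.mem_closure_iff.mp hf (ε / 3) (by positivity)
  obtain ⟨t, htN, ht⟩ := hg (ε / 3) (by positivity) N
  refine ⟨t, htN, fun x => ?_⟩
  have hclose : ∀ y, ‖f y - g y‖ ≤ ε / 3 := fun y => by
    rw [← dist_eq_norm]
    exact (BoundedContinuousFunction.dist_coe_le_dist y).trans hfg.le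
  calc ‖f (x + t) - f x‖ = ‖(f (x + t) - g (x + t)) + (g (x + t) - g x) - (f x - g x)‖ := by
        congr 1; abel
    _ ≤ ‖f (x + t) - g (x + t)‖ + ‖g (x + t) - g x‖ + ‖f x - g x‖ :=
        (norm_sub_le _ _).trans (add_le_add_left (norm_add_le _ _) _)
    _ ≤ ε := by linarith [hclose (x + t), ht x, hclose x]

lemma hasArbitrarilyLargeAlmostPeriods_of_mem_APset {f : BoundedContinuousFunction ℝ ℂ}
    (hf : f ∈ APset) : HasArbitrarilyLargeAlmostPeriods f :=
  .of_mem_closure (closure_mono (fun _ => hasArbitrarilyLargeAlmostPeriods_of_mem_span) hf)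

lemma HasArbitrarilyLargeAlmostPeriods.eq_zero_of_tendsto_atTop {E : Type*}
    [NormedAddCommGroup E] {f : ℝ → E} (hf : HasArbitrarilyLargeAlmostPeriods f)
    (h0 : Tendsto f atTop (𝓝 0)) : f = 0 := by
  funext x
  refine norm_le_zero_iff.mp (le_of_forall_pos_le_add fun ε hε => ?_)
  obtain ⟨N, hN⟩ := eventually_atTop.mp (tendsto_zero_iff_norm_tendsto_zero.mp h0
    |>.eventually (ge_mem_nhds (half_pos hε)))
  obtain ⟨t, htN, ht⟩ := hf (ε / 2) (half_pos hε) (N - x)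
  calc ‖f x‖ ≤ ‖f (x + t)‖ + ‖f (x + t) - f x‖ := by
        simpa using norm_sub_le (f (x + t)) (f (x + t) - f x)
    _ ≤ 0 + ε := by linarith [hN (x + t) (by linarith), ht x]

/-- Uniqueness of the decomposition of an asymptotically almost periodic function into an
almost periodic part and a part vanishing at infinity. -/
theorem AAP_decomposition_unique (a₁ a₂ b₁ b₂ : BoundedContinuousFunction ℝ ℂ)
    (ha₁ : a₁ ∈ APset) (ha₂ : a₂ ∈ APset)
    (hb₁ : VanishesAtInfty b₁) (hb₂ : VanishesAtInfty b₂)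
    (h : a₁ + b₁ = a₂ + b₂) : a₁ = a₂ ∧ b₁ = b₂ := by
  have hAP : a₁ - a₂ ∈ APset := (span ℂ (range charFn)).topologicalClosure.sub_mem ha₁ ha₂
  have hdiff : a₁ - a₂ = b₂ - b₁ := by
    rw [sub_eq_sub_iff_add_eq_add, h, add_comm]
  have htendsto : Tendsto (⇑(a₁ - a₂)) atTop (𝓝 0) := by
    rw [hdiff, BoundedContinuousFunction.coe_sub, ← sub_zero (0 : ℂ)]
    exact (hb₂.sub hb₁).mono_left atTop_le_cocompact
  have ha : a₁ = a₂ := sub_eq_zero.mp <| DFunLike.coe_injective <|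
    (hasArbitrarilyLargeAlmostPeriods_of_mem_APset hAP).eq_zero_of_tendsto_atTop htendsto
  exact ⟨ha, add_left_cancel (ha ▸ h)⟩
end

section
/- Let g : ℝ → ℝ be continuous with g(x) > 0 for all x, g vanishing at infinity, and suppose there exist g₀ > 0 and x₀ > 0 such that g(x) ≤ g₀/x² whenever |x| > x₀. Then for every f ∈ AAP(ℝ) and every ε > 0 there exist finite ℂ-linear combinations p and h of characters x ↦ exp(iξx), ξ ∈ ℝ, such that the supremum norm of f − (p + g·h) is at most ε. In other words, sums of exponential functions plus g times sums of exponential functions are dense in AAP(ℝ) in the supremum norm. -/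
/-- `AAP(ℝ)`: the asymptotically almost periodic functions. -/
noncomputable def AAPset : Set (BoundedContinuousFunction ℝ ℂ) :=
  {f | ∃ a ∈ APset, ∃ b : BoundedContinuousFunction ℝ ℂ, VanishesAtInfty b ∧ f = a + b}

/-!
Write `f = a + b` with `a ∈ AP(ℝ)`, `b ∈ C₀(ℝ)`; `a` is close to a trigonometric polynomial by
definition. Since `b / g` may be unbounded, first cut `b` off to a compactly supported `b₁`; then
`F = b₁ / g` is continuous and vanishes off some `(-S, S)`. A trigonometric polynomial `h`
uniformly close to the `2S`-periodic extension of `F` (Stone–Weierstrass on the circle) gives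
`g h ≈ g F = b₁` on `(-S, S)`, where `g` is bounded. Off `(-S, S)` we have `g F = 0`, and `g h`
is small once `S` is large: `‖h‖ ≤ sup ‖F‖ + δ` does not depend on `S`, and `g → 0` at infinity.
-/

open Filter Topology Set Submodule Real

lemma exists_hasCompactSupport_norm_sub_le {X E : Type*} [TopologicalSpace X] [T2Space X]
    [LocallyCompactSpace X] [NormedAddCommGroup E] [NormedSpace ℝ E] {b : X → E}
    (hb : Continuous b) (hb0 : Tendsto b (cocompact X) (𝓝 0)) {ε : ℝ} (hε : 0 < ε) :
    ∃ b₁ : X → E, Continuous b₁ ∧ HasCompactSupport b₁ ∧ ∀ x, ‖b x - b₁ x‖ ≤ ε := by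
  obtain ⟨K, hK, hbK⟩ := mem_cocompact.mp (hb0.norm.eventually (ge_mem_nhds (by simpa using hε)))
  obtain ⟨χ, hχK, -, hχc, hχ01⟩ :=
    exists_continuous_one_zero_of_isCompact hK isClosed_empty (disjoint_empty K)
  refine ⟨fun x => χ x • b x, χ.continuous.smul hb, hχc.smul_right, fun x => ?_⟩
  rw [show b x - χ x • b x = (1 - χ x) • b x by rw [sub_smul, one_smul], norm_smul]
  by_cases hx : x ∈ K
  · simp [hχK hx, hε.le]
  · calc ‖1 - χ x‖ * ‖b x‖ ≤ 1 * ε := by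
          refine mul_le_mul ?_ (hbK hx) (norm_nonneg _) zero_le_one
          rw [Real.norm_eq_abs, abs_le]
          constructor <;> linarith [hχ01 x |>.1, hχ01 x |>.2]
      _ = ε := one_mul ε

lemma charFn_apply_eq_fourier {T : ℝ} (n : ℤ) (x : ℝ) :
    charFn (2 * π * n / T) x = fourier n (x : AddCircle T) := by
  rw [fourier_coe_apply]
  change Complex.exp _ = _
  push_cast
  ring_nf

lemma exists_mem_span_charFn_eq_of_mem_span_fourier {T : ℝ} {P : C(AddCircle T, ℂ)}
    (hP : P ∈ span ℂ (range (fourier (T := T)))) :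
    ∃ h ∈ span ℂ (range charFn), ∀ x : ℝ, h x = P x := by
  induction hP using Submodule.span_induction with
  | mem _ hP =>
    obtain ⟨n, rfl⟩ := hP
    exact ⟨_, subset_span ⟨2 * π * n / T, rfl⟩, charFn_apply_eq_fourier n⟩
  | zero => exact ⟨0, zero_mem _, fun _ => rfl⟩
  | add P Q _ _ hP hQ =>
    obtain ⟨h₁, hh₁, hP⟩ := hP
    obtain ⟨h₂, hh₂, hQ⟩ := hQ
    exact ⟨h₁ + h₂, add_mem hh₁ hh₂, fun x => by simp [hP, hQ]⟩
  | smul c P _ hP =>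
    obtain ⟨h, hh, hP⟩ := hP
    exact ⟨c • h, smul_mem _ c hh, fun x => by simp [hP]⟩

lemma exists_mem_span_charFn_norm_sub_lt {T : ℝ} [Fact (0 < T)] (ψ : C(AddCircle T, ℂ))
    {δ : ℝ} (hδ : 0 < δ) : ∃ h ∈ span ℂ (range charFn), ∀ x : ℝ, ‖ψ x - h x‖ < δ := by
  have hψ : ψ ∈ closure (span ℂ (range (fourier (T := T))) : Set C(AddCircle T, ℂ)) := by
    rw [← Submodule.topologicalClosure_coe, span_fourier_closure_eq_top]
    trivial
  obtain ⟨P, hP, hψP⟩ := Metric.mem_closure_iff.mp hψ δ hδ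
  obtain ⟨h, hh, hhP⟩ := exists_mem_span_charFn_eq_of_mem_span_fourier hP
  refine ⟨h, hh, fun x => ?_⟩
  rw [hhP, ← dist_eq_norm]
  exact (ContinuousMap.dist_apply_le_dist _).trans_lt hψP

lemma exists_mem_span_charFn_norm_sub_lt_of_abs_lt {F : ℝ → ℂ} (hF : Continuous F) {S M δ : ℝ}
    (hS : 0 < S) (hFS : ∀ x, S ≤ |x| → F x = 0) (hFM : ∀ x, ‖F x‖ ≤ M) (hδ : 0 < δ) :
    ∃ h ∈ span ℂ (range charFn), (∀ x, |x| < S → ‖F x - h x‖ < δ) ∧ ∀ x, ‖h x‖ ≤ M + δ := by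
  have : Fact (0 < 2 * S) := ⟨by linarith⟩
  have hends : F (-S) = F (-S + 2 * S) := by
    rw [hFS (-S) (by simp [abs_of_pos hS]), hFS _ (by simp [show -S + 2 * S = S by ring,
      abs_of_pos hS])]
  let ψ : C(AddCircle (2 * S), ℂ) :=
    ⟨AddCircle.liftIco (2 * S) (-S) F, AddCircle.liftIco_continuous hends hF.continuousOn⟩
  obtain ⟨h, hh, hψh⟩ := exists_mem_span_charFn_norm_sub_lt ψ hδ
  refine ⟨h, hh, fun x hx => ?_, fun x => ?_⟩
  · have hψF : ψ x = F x := AddCircle.liftIco_coe_apply (by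
      constructor <;> linarith [abs_lt.mp hx])
    simpa [hψF] using hψh x
  · calc ‖h x‖ ≤ ‖ψ x‖ + ‖ψ x - h x‖ := norm_le_norm_add_norm_sub _ _
      _ ≤ M + δ := add_le_add (hFM _) (hψh x).le

lemma exists_mem_span_charFn_norm_mul_sub_le {g F : ℝ → ℂ} (hgc : Continuous g)
    (hg0 : Tendsto g (cocompact ℝ) (𝓝 0)) (hF : Continuous F) (hFc : HasCompactSupport F)
    {ε : ℝ} (hε : 0 < ε) : ∃ h ∈ span ℂ (range charFn), ∀ x, ‖g x * (F x - h x)‖ ≤ ε := by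
  obtain ⟨M, hM⟩ := hF.bounded_above_of_compact_support hFc
  let gb : ZeroAtInftyContinuousMap ℝ ℂ := ⟨⟨g, hgc⟩, hg0⟩
  have hG : ∀ x, ‖g x‖ ≤ ‖gb.toBCF‖ := gb.toBCF.norm_coe_le_norm
  set G := ‖gb.toBCF‖
  set δ := ε / (G + 1)
  have hMδ : 0 < M + δ := by
    have hM0 : 0 ≤ M := (norm_nonneg _).trans (hM 0)
    positivity
  obtain ⟨S, hS⟩ : ∃ S, ∀ x : ℝ, S ≤ |x| → F x = 0 ∧ ‖g x‖ ≤ ε / (M + δ) := by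
    have hFS : ∀ᶠ x in cocompact ℝ, F x = 0 := by
      filter_upwards [hFc.isCompact.compl_mem_cocompact] with x hx
      exact image_eq_zero_of_notMem_tsupport hx
    have hgS := hg0.norm.eventually (ge_mem_nhds (by simpa using div_pos hε hMδ))
    have hS := hFS.and hgS
    rw [← Metric.cobounded_eq_cocompact, hasBasis_cobounded_norm.eventually_iff] at hS
    simpa only [true_and, Real.norm_eq_abs, mem_ofPred_eq] using hS
  obtain ⟨h, hh, hFh, hhM⟩ := exists_mem_span_charFn_norm_sub_lt_of_abs_lt hF
    (lt_max_of_lt_right one_pos) (fun x hx => (hS x (le_of_max_le_left hx)).1) hM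
    (div_pos hε (by positivity) : 0 < δ)
  refine ⟨h, hh, fun x => ?_⟩
  rw [norm_mul]
  rcases lt_or_ge |x| (max S 1) with hx | hx
  · calc ‖g x‖ * ‖F x - h x‖ ≤ G * δ :=
          mul_le_mul (hG x) (hFh x hx).le (norm_nonneg _) (norm_nonneg _)
      _ ≤ ε := by
          rw [mul_div_assoc', div_le_iff₀ (by positivity)]
          nlinarith
  · obtain ⟨hF0, hgx⟩ := hS x (le_of_max_le_left hx)
    calc ‖g x‖ * ‖F x - h x‖ ≤ ε / (M + δ) * (M + δ) := by
          rw [hF0, zero_sub, norm_neg]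
          exact mul_le_mul hgx (hhM x) (norm_nonneg _) (by positivity)
      _ = ε := div_mul_cancel₀ ε hMδ.ne'

lemma exists_mem_span_charFn_norm_sub_mul_le {g b : ℝ → ℂ} (hgc : Continuous g)
    (hg : ∀ x, g x ≠ 0) (hg0 : Tendsto g (cocompact ℝ) (𝓝 0)) (hb : Continuous b)
    (hb0 : Tendsto b (cocompact ℝ) (𝓝 0)) {ε : ℝ} (hε : 0 < ε) :
    ∃ h ∈ span ℂ (range charFn), ∀ x, ‖b x - g x * h x‖ ≤ ε := by
  obtain ⟨b₁, hb₁, hb₁c, hbb₁⟩ := exists_hasCompactSupport_norm_sub_le hb hb0 (half_pos hε)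
  obtain ⟨h, hh, hb₁h⟩ := exists_mem_span_charFn_norm_mul_sub_le hgc hg0
    (hb₁.mul (hgc.inv₀ hg)) hb₁c.mul_right (half_pos hε)
  refine ⟨h, hh, fun x => ?_⟩
  have hsplit : b x - g x * h x = (b x - b₁ x) + g x * ((b₁ * g⁻¹) x - h x) := by
    simp only [Pi.mul_apply, Pi.inv_apply]
    field_simp [hg x]
    ring
  calc ‖b x - g x * h x‖ ≤ ‖b x - b₁ x‖ + ‖g x * ((b₁ * g⁻¹) x - h x)‖ :=
        hsplit ▸ norm_add_le _ _
    _ ≤ ε / 2 + ε / 2 := add_le_add (hbb₁ x) (hb₁h x)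
    _ = ε := add_halves ε

theorem AAP_approximation_general (g : ℝ → ℝ) (hgc : Continuous g) (hgpos : ∀ x, 0 < g x)
    (hg0 : Filter.Tendsto g (Filter.cocompact ℝ) (nhds 0))
    (f : BoundedContinuousFunction ℝ ℂ) (hf : f ∈ AAPset)
    (ε : ℝ) (hε : 0 < ε) :
    ∃ p h : BoundedContinuousFunction ℝ ℂ,
      p ∈ Submodule.span ℂ (Set.range charFn) ∧
      h ∈ Submodule.span ℂ (Set.range charFn) ∧
      ∀ x : ℝ, ‖f x - (p x + (g x : ℂ) * h x)‖ ≤ ε := by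
  obtain ⟨a, ha, b, hb, rfl⟩ := hf
  obtain ⟨p, hp, hap⟩ := Metric.mem_closure_iff.mp ha (ε / 2) (half_pos hε)
  obtain ⟨h, hh, hbh⟩ := exists_mem_span_charFn_norm_sub_mul_le (g := fun x => (g x : ℂ))
    (by fun_prop) (fun x => Complex.ofReal_ne_zero.mpr (hgpos x).ne')
    ((Complex.continuous_ofReal.tendsto' 0 0 Complex.ofReal_zero).comp hg0) b.continuous hb
    (half_pos hε)
  refine ⟨p, h, hp, hh, fun x => ?_⟩
  have hax : ‖a x - p x‖ ≤ ε / 2 := by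
    rw [← dist_eq_norm]
    exact (a.dist_coe_le_dist x).trans hap.le
  calc ‖(a + b) x - (p x + g x * h x)‖ = ‖(a x - p x) + (b x - g x * h x)‖ := by
        rw [BoundedContinuousFunction.add_apply]
        ring_nf
    _ ≤ ε / 2 + ε / 2 := (norm_add_le _ _).trans (add_le_add hax (hbh x))
    _ = ε := add_halves ε

/-- Sums of exponential functions plus `g` times sums of exponential functions are dense in
`AAP(ℝ)` in the supremum norm, for any continuous positive `g` vanishing at infinity which is
eventually dominated by `g₀ / x²`. -/
theorem AAP_approximation (g : ℝ → ℝ) (hgc : Continuous g) (hgpos : ∀ x, 0 < g x)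
    (hg0 : Filter.Tendsto g (Filter.cocompact ℝ) (nhds 0))
    (g₀ x₀ : ℝ) (hg₀ : 0 < g₀) (hx₀ : 0 < x₀)
    (hgbound : ∀ x : ℝ, x₀ < |x| → g x ≤ g₀ / x ^ 2)
    (f : BoundedContinuousFunction ℝ ℂ) (hf : f ∈ AAPset)
    (ε : ℝ) (hε : 0 < ε) :
    ∃ p h : BoundedContinuousFunction ℝ ℂ,
      p ∈ Submodule.span ℂ (Set.range charFn) ∧
      h ∈ Submodule.span ℂ (Set.range charFn) ∧
      ∀ x : ℝ, ‖f x - (p x + (g x : ℂ) * h x)‖ ≤ ε :=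
  AAP_approximation_general g hgc hgpos hg0 f hf ε hε
end

section
/- The spiral-arc functions 𝔞 and 𝔟 solve the holonomy ODE system: for all t ∈ ℝ, 𝔞'(t) = i c (ν 𝔞(t) − μ e^{iλt} · conj(𝔟(t))) and 𝔟'(t) = i c (ν 𝔟(t) + μ e^{iλt} · conj(𝔞(t))), with initial conditions 𝔞(0) = 1 and 𝔟(0) = 0. -/
open Complex

/-!
Both functions belong to the family `t ↦ e^{iλt/2} (p cos Δt + q sin Δt)`, which is closed under
differentiation and, after multiplication by `e^{iλt}`, under conjugation, each acting linearly on
the coefficient pair `(p, q)`. Both sides of each equation therefore lie in this family, and the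
system reduces to comparing coefficients of `cos Δt` and `sin Δt`; those identities hold exactly
because `Δ² = λ²/4 + c² − νλc` and `|μ|² = 1 − ν²`.
-/

noncomputable def spiral (lam Δ : ℝ) (p q : ℂ) (t : ℝ) : ℂ :=
  exp (I * lam * t / 2) * (p * (Real.cos (Δ * t) : ℂ) + q * (Real.sin (Δ * t) : ℂ))

section Spiral

variable (lam Δ : ℝ) (p q : ℂ)

@[simp]
lemma spiral_zero : spiral lam Δ p q 0 = p := by
  simp [spiral]

lemma hasDerivAt_spiral (t : ℝ) :
    HasDerivAt (spiral lam Δ p q)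
      (spiral lam Δ (I * lam / 2 * p + Δ * q) (I * lam / 2 * q - Δ * p) t) t := by
  have hphase : HasDerivAt (fun s : ℝ => I * lam * s / 2) (I * lam / 2) t := by
    simpa using ((ofRealCLM.hasDerivAt (x := t)).const_mul (I * lam)).div_const 2
  have hcos := (((hasDerivAt_id t).const_mul Δ).cos).ofReal_comp
  have hsin := (((hasDerivAt_id t).const_mul Δ).sin).ofReal_comp
  refine (hphase.cexp.mul ((hcos.const_mul p).add (hsin.const_mul q))).congr_deriv ?_
  simp only [spiral, id, mul_one, ofReal_neg, ofReal_mul, Pi.add_apply]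
  ring

lemma exp_mul_conj_spiral (t : ℝ) :
    exp (I * lam * t) * starRingEnd ℂ (spiral lam Δ p q t)
      = spiral lam Δ (starRingEnd ℂ p) (starRingEnd ℂ q) t := by
  have hphase : exp (I * lam * t) * starRingEnd ℂ (exp (I * lam * t / 2))
      = exp (I * lam * t / 2) := by
    rw [← exp_conj, ← exp_add]
    congr 1
    simp only [map_div₀, map_mul, conj_I, conj_ofReal, map_ofNat]
    ring
  simp only [spiral, map_mul, map_add, conj_ofReal]
  rw [← mul_assoc, hphase]

end Spiral

section Holonomy

variable {c lam ν Δ : ℝ} {μ : ℂ}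

lemma hasDerivAt_spiral_holonomy_fst (hΔ : Δ ≠ 0)
    (hΔsq : Δ ^ 2 = lam ^ 2 / 4 + c ^ 2 - ν * lam * c)
    (hμ : μ * starRingEnd ℂ μ = 1 - ν ^ 2) (t : ℝ) :
    HasDerivAt (spiral lam Δ 1 (I * (2 * ν * c - lam : ℝ) / (2 * Δ : ℝ)))
      (I * c * (ν * spiral lam Δ 1 (I * (2 * ν * c - lam : ℝ) / (2 * Δ : ℝ)) t -
        μ * exp (I * lam * t) * starRingEnd ℂ (spiral lam Δ 0 (μ * (I * c / Δ)) t))) t := by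
  have hΔ' : (Δ : ℂ) ≠ 0 := ofReal_ne_zero.mpr hΔ
  have hΔsq' : (Δ : ℂ) ^ 2 = lam ^ 2 / 4 + c ^ 2 - ν * lam * c := by exact_mod_cast hΔsq
  refine (hasDerivAt_spiral lam Δ _ _ t).congr_deriv ?_
  rw [mul_assoc μ, exp_mul_conj_spiral]
  simp only [spiral, map_mul, map_div₀, conj_I, conj_ofReal, map_zero]
  simp only [ofReal_mul, ofReal_sub, ofReal_ofNat]
  field_simp
  linear_combination (Real.sin (Δ * t) : ℂ) * (4 * c ^ 2 * hμ - 4 * hΔsq'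
    - ((2 * ν * c - lam) ^ 2 + 4 * c ^ 2 * μ * starRingEnd ℂ μ) * I_sq)

lemma hasDerivAt_spiral_holonomy_snd (hΔ : Δ ≠ 0) (t : ℝ) :
    HasDerivAt (spiral lam Δ 0 (μ * (I * c / Δ)))
      (I * c * (ν * spiral lam Δ 0 (μ * (I * c / Δ)) t +
        μ * exp (I * lam * t) *
          starRingEnd ℂ (spiral lam Δ 1 (I * (2 * ν * c - lam : ℝ) / (2 * Δ : ℝ)) t))) t := by
  have hΔ' : (Δ : ℂ) ≠ 0 := ofReal_ne_zero.mpr hΔ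
  refine (hasDerivAt_spiral lam Δ _ _ t).congr_deriv ?_
  rw [mul_assoc μ, exp_mul_conj_spiral]
  simp only [spiral, map_mul, map_div₀, map_one, conj_I, conj_ofReal]
  simp only [ofReal_mul, ofReal_sub, ofReal_ofNat]
  field_simp
  ring

end Holonomy

/-- The spiral-arc functions `𝔞` and `𝔟` solve the holonomy ODE system
`𝔞' = ic(ν 𝔞 − μ e^{iλt} conj 𝔟)`, `𝔟' = ic(ν 𝔟 + μ e^{iλt} conj 𝔞)`, with
`𝔞(0) = 1`, `𝔟(0) = 0`. -/
theorem spiral_solves_holonomy_ODE (c lam ν : ℝ) (μ : ℂ)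
    (hnorm : ν ^ 2 + ‖μ‖ ^ 2 = 1)
    (Δ : ℝ) (hΔdef : Δ = Real.sqrt (lam ^ 2 / 4 + c ^ 2 - ν * lam * c)) (hΔpos : 0 < Δ)
    (𝔞 𝔟 : ℝ → ℂ)
    (ha : ∀ t : ℝ, 𝔞 t = Complex.exp (Complex.I * lam * t / 2) *
        ((Real.cos (Δ * t) : ℂ) +
          Complex.I * (2 * ν * c - lam : ℝ) / (2 * Δ : ℝ) * (Real.sin (Δ * t) : ℂ)))
    (hb : ∀ t : ℝ, 𝔟 t = μ * Complex.exp (Complex.I * lam * t / 2) *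
        (Complex.I * c / (Δ : ℝ)) * (Real.sin (Δ * t) : ℂ)) :
    𝔞 0 = 1 ∧ 𝔟 0 = 0 ∧
    (∀ t : ℝ, HasDerivAt 𝔞
      (Complex.I * c * ((ν : ℂ) * 𝔞 t -
        μ * Complex.exp (Complex.I * lam * t) * (starRingEnd ℂ) (𝔟 t))) t) ∧
    (∀ t : ℝ, HasDerivAt 𝔟
      (Complex.I * c * ((ν : ℂ) * 𝔟 t +
        μ * Complex.exp (Complex.I * lam * t) * (starRingEnd ℂ) (𝔞 t))) t) := by
  obtain rfl : 𝔞 = spiral lam Δ 1 (I * (2 * ν * c - lam : ℝ) / (2 * Δ : ℝ)) := by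
    funext t; rw [ha, spiral, one_mul]
  obtain rfl : 𝔟 = spiral lam Δ 0 (μ * (I * c / Δ)) := by
    funext t; rw [hb, spiral]; ring
  have hΔsq : Δ ^ 2 = lam ^ 2 / 4 + c ^ 2 - ν * lam * c := by
    rw [hΔdef, Real.sq_sqrt (Real.sqrt_pos.mp (hΔdef ▸ hΔpos)).le]
  have hμ : μ * starRingEnd ℂ μ = 1 - ν ^ 2 := by
    rw [mul_conj, normSq_eq_norm_sq]
    exact_mod_cast eq_sub_of_add_eq' hnorm
  exact ⟨spiral_zero .., spiral_zero .., hasDerivAt_spiral_holonomy_fst hΔpos.ne' hΔsq hμ,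
    hasDerivAt_spiral_holonomy_snd hΔpos.ne'⟩
end

section
/- The spiral-arc holonomy is asymptotically almost periodic in c: fix t ∈ ℝ and regard 𝔞 and 𝔟 as functions of c (writing 𝔞(c,t), 𝔟(c,t), with Δ(c) := √(λ²/4 + c² − νλc)). Then as c → +∞, 𝔞(c,t) − e^{iλt/2}( cos((c − νλ/2)t) + iν sin((c − νλ/2)t) ) → 0 and 𝔟(c,t) − iμ e^{iλt/2} sin((c − νλ/2)t) → 0; the subtracted functions are periodic in c. -/
/-!
Completing the square, `Δ c = √((c - νλ/2)² + K)` for a constant `K`, so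
`Δ c - (c - νλ/2) = K / (Δ c + c - νλ/2) → 0`. As `sin` and `cos` are `1`-Lipschitz, the
oscillating factors at frequency `Δ c` may be replaced by those at frequency `c - νλ/2`, while the
coefficients `(2νc - λ)/(2 Δ c)` and `c / Δ c` tend to `ν` and `1`.
-/

open Filter Topology Real

lemma LipschitzWith.tendsto_comp_sub_comp {α E F : Type*} [SeminormedAddCommGroup E]
    [SeminormedAddCommGroup F] {K : NNReal} {φ : E → F} (hφ : LipschitzWith K φ)
    {l : Filter α} {f g : α → E} (h : Tendsto (fun x => f x - g x) l (𝓝 0)) :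
    Tendsto (fun x => φ (f x) - φ (g x)) l (𝓝 0) := by
  refine squeeze_zero_norm (fun x => ?_)
    (by simpa using (tendsto_norm_zero.comp h).const_mul (K : ℝ))
  simpa only [dist_eq_norm] using hφ.dist_le_mul (f x) (g x)

lemma tendsto_mul_sin_sub_mul_sin {α : Type*} {l : Filter α} {u p q : α → ℝ} {a : ℝ}
    (hu : Tendsto u l (𝓝 a)) (hpq : Tendsto (fun x => p x - q x) l (𝓝 0)) :
    Tendsto (fun x => u x * sin (p x) - a * sin (q x)) l (𝓝 0) := by
  -- `u sin p - a sin q = (u - a) sin p + a (sin p - sin q)`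
  have hsin : IsBoundedUnder (· ≤ ·) l ((‖·‖) ∘ fun x => sin (p x)) :=
    isBoundedUnder_of ⟨1, fun x => by simpa using abs_sin_le_one (p x)⟩
  have hfactor := (tendsto_sub_nhds_zero_iff.2 hu).zero_mul_isBoundedUnder_le hsin
  have hdiff := (lipschitzWith_sin.tendsto_comp_sub_comp hpq).const_mul a
  rw [mul_zero] at hdiff
  simpa using (hfactor.add hdiff).congr fun x => by ring

lemma tendsto_sqrt_sq_add_sub_atTop (K : ℝ) :
    Tendsto (fun x => √(x ^ 2 + K) - x) atTop (𝓝 0) := by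
  have hden : Tendsto (fun x => √(x ^ 2 + K) + x) atTop atTop :=
    tendsto_atTop_mono (fun x => le_add_of_nonneg_left (sqrt_nonneg _)) tendsto_id
  refine (tendsto_const_nhds (x := K) |>.div_atTop hden).congr' ?_
  filter_upwards [eventually_ge_atTop (|K| + 1)] with x hx
  have hK : 0 ≤ x ^ 2 + K := by nlinarith [neg_abs_le K, abs_nonneg K]
  have hpos : 0 < √(x ^ 2 + K) + x :=
    add_pos_of_nonneg_of_pos (sqrt_nonneg _) (by linarith [abs_nonneg K])
  rw [div_eq_iff hpos.ne']
  linear_combination -(sq_sqrt hK)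

lemma tendsto_sqrt_quadratic_sub_atTop (b d : ℝ) :
    Tendsto (fun x => √(x ^ 2 + b * x + d) - (x + b / 2)) atTop (𝓝 0) := by
  refine ((tendsto_sqrt_sq_add_sub_atTop (d - b ^ 2 / 4)).comp
    (tendsto_atTop_add_const_right atTop (b / 2) tendsto_id)).congr fun x => ?_
  simp only [Function.comp_apply, id]
  rw [show (x + b / 2) ^ 2 + (d - b ^ 2 / 4) = x ^ 2 + b * x + d by ring]

lemma tendsto_div_of_tendsto_sub_atTop {α : Type*} {l : Filter α} {f g : α → ℝ} {a : ℝ}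
    (hf : Tendsto f l atTop) (h : Tendsto (fun x => g x - f x) l (𝓝 a)) :
    Tendsto (fun x => g x / f x) l (𝓝 1) := by
  have := (h.div_atTop hf).const_add 1
  rw [add_zero] at this
  refine this.congr' ?_
  filter_upwards [hf.eventually_ne_atTop 0] with x hx
  field_simp
  ring

theorem spiral_holonomy_asymptotically_periodic_general (lam ν : ℝ) (μ : ℂ)
    (t : ℝ)
    (Δ : ℝ → ℝ) (hΔ : ∀ c : ℝ, Δ c = Real.sqrt (lam ^ 2 / 4 + c ^ 2 - ν * lam * c))
    (𝔞 𝔟 : ℝ → ℂ)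
    (ha : ∀ c : ℝ, 𝔞 c = Complex.exp (Complex.I * lam * t / 2) *
        ((Real.cos (Δ c * t) : ℂ) +
          Complex.I * (2 * ν * c - lam : ℝ) / (2 * Δ c : ℝ) * (Real.sin (Δ c * t) : ℂ)))
    (hb : ∀ c : ℝ, 𝔟 c = μ * Complex.exp (Complex.I * lam * t / 2) *
        (Complex.I * c / (Δ c : ℝ)) * (Real.sin (Δ c * t) : ℂ)) :
    Filter.Tendsto (fun c : ℝ => 𝔞 c - Complex.exp (Complex.I * lam * t / 2) *
        ((Real.cos ((c - ν * lam / 2) * t) : ℂ) +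
          Complex.I * (ν : ℝ) * (Real.sin ((c - ν * lam / 2) * t) : ℂ)))
      Filter.atTop (nhds 0) ∧
    Filter.Tendsto (fun c : ℝ => 𝔟 c - Complex.I * μ * Complex.exp (Complex.I * lam * t / 2) *
        (Real.sin ((c - ν * lam / 2) * t) : ℂ))
      Filter.atTop (nhds 0) ∧
    (t ≠ 0 →
      Function.Periodic (fun c : ℝ => Complex.exp (Complex.I * lam * t / 2) *
        ((Real.cos ((c - ν * lam / 2) * t) : ℂ) +
          Complex.I * (ν : ℝ) * (Real.sin ((c - ν * lam / 2) * t) : ℂ))) (2 * Real.pi / t) ∧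
      Function.Periodic (fun c : ℝ => Complex.I * μ * Complex.exp (Complex.I * lam * t / 2) *
        (Real.sin ((c - ν * lam / 2) * t) : ℂ)) (2 * Real.pi / t)) := by
  set E := Complex.exp (Complex.I * lam * t / 2)
  have hΔθ : Tendsto (fun c => Δ c - (c - ν * lam / 2)) atTop (𝓝 0) :=
    (tendsto_sqrt_quadratic_sub_atTop (-(ν * lam)) (lam ^ 2 / 4)).congr fun c => by
      rw [hΔ]; ring_nf
  have hΔ_top : Tendsto Δ atTop atTop :=
    ((tendsto_atTop_add_const_right atTop (-(ν * lam / 2)) tendsto_id).atTop_add hΔθ).congr fun c => by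
      simp only [id]; ring
  have hcΔ : Tendsto (fun c => c / Δ c) atTop (𝓝 1) :=
    tendsto_div_of_tendsto_sub_atTop hΔ_top <|
      (hΔθ.neg.add_const (ν * lam / 2)).congr fun c => by ring
  have hκ : Tendsto (fun c => (2 * ν * c - lam) / (2 * Δ c)) atTop (𝓝 ν) := by
    have := (hcΔ.const_mul ν).sub (tendsto_const_nhds (x := lam / 2) |>.div_atTop hΔ_top)
    rw [mul_one, sub_zero] at this
    exact this.congr fun c => by ring
  have harg : Tendsto (fun c => Δ c * t - (c - ν * lam / 2) * t) atTop (𝓝 0) := by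
    simpa only [sub_mul, zero_mul] using hΔθ.mul_const t
  refine ⟨?_, ?_, fun _ => ⟨?_, ?_⟩⟩
  · have hcos := (lipschitzWith_cos.tendsto_comp_sub_comp harg).ofReal
    have hsin := (tendsto_mul_sin_sub_mul_sin hκ harg).ofReal
    simpa using ((hcos.add (hsin.const_mul Complex.I)).const_mul E).congr fun c => by
      rw [ha]; push_cast; ring
  · have hsin := (tendsto_mul_sin_sub_mul_sin hcΔ harg).ofReal.const_mul (Complex.I * μ * E)
    simpa using hsin.congr fun c => by rw [hb]; push_cast; ring
  · have hF : Function.Periodic (fun x : ℝ => E * ((Real.cos x : ℂ) +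
        Complex.I * (ν : ℝ) * (Real.sin x : ℂ))) (2 * π) := fun x => by
      simp only [cos_add_two_pi, sin_add_two_pi]
    exact (hF.mul_const' t).sub_const (ν * lam / 2)
  · have hF : Function.Periodic (fun x : ℝ => Complex.I * μ * E * (Real.sin x : ℂ)) (2 * π) :=
      fun x => by simp only [sin_add_two_pi]
    exact (hF.mul_const' t).sub_const (ν * lam / 2)

/-- The spiral-arc holonomy is asymptotically almost periodic in the connection parameter `c`:
as `c → +∞`, `𝔞(c,t)` and `𝔟(c,t)` approach the functions
`e^{iλt/2}(cos((c − νλ/2)t) + iν sin((c − νλ/2)t))` and `iμ e^{iλt/2} sin((c − νλ/2)t)`,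
which are periodic in `c` (with period `2π/t` when `t ≠ 0`). -/
theorem spiral_holonomy_asymptotically_periodic (lam ν : ℝ) (μ : ℂ)
    (hnorm : ν ^ 2 + ‖μ‖ ^ 2 = 1) (t : ℝ)
    (Δ : ℝ → ℝ) (hΔ : ∀ c : ℝ, Δ c = Real.sqrt (lam ^ 2 / 4 + c ^ 2 - ν * lam * c))
    (𝔞 𝔟 : ℝ → ℂ)
    (ha : ∀ c : ℝ, 𝔞 c = Complex.exp (Complex.I * lam * t / 2) *
        ((Real.cos (Δ c * t) : ℂ) +
          Complex.I * (2 * ν * c - lam : ℝ) / (2 * Δ c : ℝ) * (Real.sin (Δ c * t) : ℂ)))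
    (hb : ∀ c : ℝ, 𝔟 c = μ * Complex.exp (Complex.I * lam * t / 2) *
        (Complex.I * c / (Δ c : ℝ)) * (Real.sin (Δ c * t) : ℂ)) :
    Filter.Tendsto (fun c : ℝ => 𝔞 c - Complex.exp (Complex.I * lam * t / 2) *
        ((Real.cos ((c - ν * lam / 2) * t) : ℂ) +
          Complex.I * (ν : ℝ) * (Real.sin ((c - ν * lam / 2) * t) : ℂ)))
      Filter.atTop (nhds 0) ∧
    Filter.Tendsto (fun c : ℝ => 𝔟 c - Complex.I * μ * Complex.exp (Complex.I * lam * t / 2) *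
        (Real.sin ((c - ν * lam / 2) * t) : ℂ))
      Filter.atTop (nhds 0) ∧
    (t ≠ 0 →
      Function.Periodic (fun c : ℝ => Complex.exp (Complex.I * lam * t / 2) *
        ((Real.cos ((c - ν * lam / 2) * t) : ℂ) +
          Complex.I * (ν : ℝ) * (Real.sin ((c - ν * lam / 2) * t) : ℂ))) (2 * Real.pi / t) ∧
      Function.Periodic (fun c : ℝ => Complex.I * μ * Complex.exp (Complex.I * lam * t / 2) *
        (Real.sin ((c - ν * lam / 2) * t) : ℂ)) (2 * Real.pi / t)) :=
  spiral_holonomy_asymptotically_periodic_general lam ν μ t Δ hΔ 𝔞 𝔟 ha hb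
end

section
/- For fixed t > 0 and λ > 0, the function B_{λ,t}(c) is O(c⁻²) as c → +∞: there exist constants C > 0 and c₁ > 0 such that B_{λ,t}(c) ≤ C/c² for all c ≥ c₁. -/
/-- For fixed `t > 0` and `λ > 0`, the function `B_{λ,t}(c)` is `O(c⁻²)` as `c → +∞`. -/
theorem B_is_O_c_inv_sq (lam t : ℝ) (hlam : 0 < lam) (ht : 0 < t)
    (B : ℝ → ℝ)
    (hB : ∀ c : ℝ, B c =
        lam ^ 2 / (4 * c ^ 2 + lam ^ 2) * Real.sin (t * Real.sqrt (c ^ 2 + lam ^ 2 / 4)) ^ 2 +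
        (Real.cos (c * t) - Real.cos (t * Real.sqrt (c ^ 2 + lam ^ 2 / 4))) ^ 2) :
    ∃ C > (0:ℝ), ∃ c₁ > (0:ℝ), ∀ c ≥ c₁, B c ≤ C / c ^ 2 := by
  refine ⟨lam ^ 2 / 4 + t ^ 2 * lam ^ 4 / 16, by positivity, 1, one_pos, ?_⟩
  intro c hc
  have hc0 : (0:ℝ) < c := lt_of_lt_of_le one_pos hc
  set s := Real.sqrt (c ^ 2 + lam ^ 2 / 4) with hs
  have hsnn : 0 ≤ s := Real.sqrt_nonneg _
  have hsc : c ≤ s := by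
    rw [hs]
    nlinarith [Real.sq_sqrt (by positivity : (0:ℝ) ≤ c ^ 2 + lam ^ 2 / 4),
      Real.sqrt_nonneg (c ^ 2 + lam ^ 2 / 4)]
  have hsq : s ^ 2 = c ^ 2 + lam ^ 2 / 4 :=
    Real.sq_sqrt (by positivity)
  -- s - c ≤ lam^2 / (4c)
  have hdiff : s - c ≤ lam ^ 2 / (4 * c) := by
    rw [le_div_iff₀ (by positivity)]
    nlinarith
  -- |cos(ct) - cos(ts)| ≤ t*(s - c)
  have hlip : |Real.cos (c * t) - Real.cos (t * s)| ≤ t * (s - c) := by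
    have key : ∀ x y : ℝ, |Real.cos x - Real.cos y| ≤ |x - y| := by
      intro x y
      rw [Real.cos_sub_cos]
      calc |-2 * Real.sin ((x + y) / 2) * Real.sin ((x - y) / 2)|
          = 2 * (|Real.sin ((x + y) / 2)| * |Real.sin ((x - y) / 2)|) := by
            rw [abs_mul, abs_mul]; simp [abs_of_nonneg]; ring
        _ ≤ 2 * (1 * |(x - y) / 2|) := by
            have := mul_le_mul (Real.abs_sin_le_one ((x + y) / 2))
              (Real.abs_sin_le_abs (x := (x - y) / 2)) (abs_nonneg _) zero_le_one
            linarith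
        _ = |x - y| := by rw [one_mul, abs_div]; simp; ring
    calc |Real.cos (c * t) - Real.cos (t * s)| ≤ |c * t - t * s| := key _ _
      _ = t * (s - c) := by
          rw [abs_sub_comm, abs_of_nonneg (by nlinarith)]; ring
  have h2 : (Real.cos (c * t) - Real.cos (t * s)) ^ 2 ≤ (t * (s - c)) ^ 2 := by
    rw [← sq_abs (Real.cos (c * t) - Real.cos (t * s))]
    exact pow_le_pow_left₀ (abs_nonneg _) hlip 2
  have h2' : (t * (s - c)) ^ 2 ≤ t ^ 2 * lam ^ 4 / 16 / c ^ 2 := by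
    have h3 : t * (s - c) ≤ t * (lam ^ 2 / (4 * c)) :=
      mul_le_mul_of_nonneg_left hdiff ht.le
    have h4 : (t * (s - c)) ^ 2 ≤ (t * (lam ^ 2 / (4 * c))) ^ 2 :=
      pow_le_pow_left₀ (by nlinarith) h3 2
    calc (t * (s - c)) ^ 2 ≤ (t * (lam ^ 2 / (4 * c))) ^ 2 := h4
      _ = t ^ 2 * lam ^ 4 / 16 / c ^ 2 := by field_simp; ring
  have h1 : lam ^ 2 / (4 * c ^ 2 + lam ^ 2) * Real.sin (t * s) ^ 2
      ≤ lam ^ 2 / 4 / c ^ 2 := by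
    have hsin : Real.sin (t * s) ^ 2 ≤ 1 := Real.sin_sq_le_one _
    have hd : lam ^ 2 / (4 * c ^ 2 + lam ^ 2) ≤ lam ^ 2 / (4 * c ^ 2) := by
      apply div_le_div_of_nonneg_left (by positivity) (by positivity)
      nlinarith
    calc lam ^ 2 / (4 * c ^ 2 + lam ^ 2) * Real.sin (t * s) ^ 2
        ≤ lam ^ 2 / (4 * c ^ 2 + lam ^ 2) * 1 :=
          mul_le_mul_of_nonneg_left hsin (by positivity)
      _ ≤ lam ^ 2 / (4 * c ^ 2) := by rw [mul_one]; exact hd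
      _ = lam ^ 2 / 4 / c ^ 2 := by ring
  rw [hB c]
  calc lam ^ 2 / (4 * c ^ 2 + lam ^ 2) * Real.sin (t * s) ^ 2 +
        (Real.cos (c * t) - Real.cos (t * s)) ^ 2
      ≤ lam ^ 2 / 4 / c ^ 2 + t ^ 2 * lam ^ 4 / 16 / c ^ 2 :=
        add_le_add h1 (le_trans h2 h2')
    _ = (lam ^ 2 / 4 + t ^ 2 * lam ^ 4 / 16) / c ^ 2 := by ring
end

section
/- For every real c, B_{2,1}(c) > 0; that is, sin²(√(c²+1))/(c²+1) + (cos c − cos √(c²+1))² > 0 for all c ∈ ℝ. -/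
/-- For every real `c`, `B_{2,1}(c) > 0`:
`sin²(√(c²+1))/(c²+1) + (cos c − cos √(c²+1))² > 0`. -/
theorem B_two_one_pos (c : ℝ) :
    0 < Real.sin (Real.sqrt (c ^ 2 + 1)) ^ 2 / (c ^ 2 + 1) +
        (Real.cos c - Real.cos (Real.sqrt (c ^ 2 + 1))) ^ 2 := by
  set s := Real.sqrt (c ^ 2 + 1) with hs
  have hpos : (0:ℝ) < c ^ 2 + 1 := by positivity
  have hs2 : s ^ 2 = c ^ 2 + 1 := Real.sq_sqrt hpos.le
  by_cases h1 : Real.sin s = 0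
  · -- first term is zero; show second term positive
    have hne : Real.cos c ≠ Real.cos s := by
      intro hcc
      have hcos2 : Real.cos s ^ 2 = 1 := by
        have := Real.sin_sq_add_cos_sq s
        rw [h1] at this; linarith
      have hsinc : Real.sin c = 0 := by
        have := Real.sin_sq_add_cos_sq c
        have : Real.sin c ^ 2 = 0 := by rw [hcc, hcos2] at this; linarith
        exact pow_eq_zero_iff (n := 2) (by norm_num) |>.mp this
      obtain ⟨m, hm⟩ := Real.sin_eq_zero_iff.mp hsinc
      obtain ⟨k, hk⟩ := Real.sin_eq_zero_iff.mp h1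
      have key : ((k^2 - m^2 : ℤ) : ℝ) * Real.pi ^ 2 = 1 := by
        push_cast
        have e1 : s ^ 2 = (k:ℝ)^2 * Real.pi^2 := by rw [← hk]; ring
        have e2 : c ^ 2 = (m:ℝ)^2 * Real.pi^2 := by rw [← hm]; ring
        linear_combination hs2 - e1 + e2
      have hpi : (3:ℝ) < Real.pi := Real.pi_gt_three
      rcases lt_trichotomy (k^2 - m^2 : ℤ) 0 with h | h | h
      · have : ((k^2 - m^2 : ℤ) : ℝ) ≤ -1 := by exact_mod_cast Int.le_of_lt_add_one (by omega : (k^2-m^2:ℤ) < -1 + 1)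
        nlinarith
      · rw [h] at key; norm_num at key
      · have : (1:ℝ) ≤ ((k^2 - m^2 : ℤ) : ℝ) := by exact_mod_cast h
        nlinarith
    have : 0 < (Real.cos c - Real.cos s) ^ 2 := by
      have := sub_ne_zero.mpr hne
      positivity
    have h0 : 0 ≤ Real.sin s ^ 2 / (c ^ 2 + 1) := by positivity
    linarith
  · have : 0 < Real.sin s ^ 2 / (c ^ 2 + 1) := by positivity
    have h0 : 0 ≤ (Real.cos c - Real.cos s) ^ 2 := sq_nonneg _
    linarith
end

section
/- Reduction of the holonomy system to a second-order ODE: let c ∈ ℝ, let m : ℝ → ℂ be differentiable and nowhere vanishing, let n : ℝ → ℝ be differentiable, and let a, b : ℝ → ℂ be differentiable functions satisfying a'(t) = i c ( n(t) a(t) − m(t) · conj(b(t)) ) and b'(t) = i c ( n(t) b(t) + m(t) · conj(a(t)) ) for all t. Then a is twice differentiable and a''(t) = N(t) a(t) + M(t) a'(t) for all t, where M(t) := m'(t)/m(t) and N(t) := i c ( n'(t) − M(t) n(t) + i c ( |m(t)|² + n(t)² ) ). -/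
/-!
Differentiate `a' = ic(n a − m conj b)` by the product rule and substitute the conjugate of the
equation for `b'`. The unknown `conj b` then appears only through `ic m conj b`, which the
equation for `a'` expresses as `ic n a − a'`; in particular `ic m' conj b = M (ic n a − a')`,
which is where `m ≠ 0` enters, and collecting terms gives `N a + M a'`.
-/

open Complex ComplexConjugate

lemma hasDerivAt_holonomy_field {c : ℝ} {m a b : ℝ → ℂ} {n : ℝ → ℝ} {m' a' b' : ℂ} {n' t : ℝ}
    (hm : HasDerivAt m m' t) (hn : HasDerivAt n n' t) (ha : HasDerivAt a a' t)
    (hb : HasDerivAt b b' t) :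
    HasDerivAt (fun s => I * c * ((n s : ℂ) * a s - m s * conj (b s)))
      (I * c * ((n' * a t + n t * a') - (m' * conj (b t) + m t * conj b'))) t :=
  ((hn.ofReal_comp.mul ha).sub (hm.mul hb.star)).const_mul (I * c)

lemma holonomy_second_derivative_eq (c n n' : ℝ) {m : ℂ} (m' a b : ℂ) (hm : m ≠ 0) :
    I * c * ((n' * a + n * (I * c * (n * a - m * conj b))) -
        (m' * conj b + m * conj (I * c * (n * b + m * conj a)))) =
      I * c * (n' - m' / m * n + I * c * ((‖m‖ ^ 2 + n ^ 2 : ℝ) : ℂ)) * a +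
        m' / m * (I * c * (n * a - m * conj b)) := by
  have hnorm : ((‖m‖ ^ 2 : ℝ) : ℂ) = m * conj m := by
    rw [Complex.sq_norm, Complex.mul_conj]
  simp only [map_mul, map_add, Complex.conj_I, Complex.conj_ofReal, Complex.conj_conj]
  push_cast [hnorm]
  field_simp
  ring

/-- Reduction of the holonomy system to a second-order ODE: if `a, b` solve
`a' = ic(n a − m conj b)`, `b' = ic(n b + m conj a)` with `m` nowhere vanishing, then `a`
is twice differentiable with `a'' = N a + M a'`, where `M = m'/m` and
`N = ic(n' − M n + ic(|m|² + n²))`. -/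
theorem holonomy_second_order_ODE (c : ℝ) (m m' : ℝ → ℂ)
    (hm : ∀ t : ℝ, HasDerivAt m (m' t) t) (hm0 : ∀ t : ℝ, m t ≠ 0)
    (n n' : ℝ → ℝ) (hn : ∀ t : ℝ, HasDerivAt n (n' t) t)
    (a b : ℝ → ℂ)
    (ha : ∀ t : ℝ, HasDerivAt a
      (Complex.I * c * ((n t : ℂ) * a t - m t * (starRingEnd ℂ) (b t))) t)
    (hb : ∀ t : ℝ, HasDerivAt b
      (Complex.I * c * ((n t : ℂ) * b t + m t * (starRingEnd ℂ) (a t))) t) :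
    ∀ t : ℝ, HasDerivAt
      (fun s : ℝ => Complex.I * c * ((n s : ℂ) * a s - m s * (starRingEnd ℂ) (b s)))
      ((Complex.I * c * ((n' t : ℂ) - (m' t / m t) * (n t : ℂ) +
          Complex.I * c * ((‖m t‖ ^ 2 + n t ^ 2 : ℝ) : ℂ))) * a t +
        (m' t / m t) *
          (Complex.I * c * ((n t : ℂ) * a t - m t * (starRingEnd ℂ) (b t)))) t := fun t =>
  (hasDerivAt_holonomy_field (hm t) (hn t) (ha t) (hb t)).congr_deriv
    (holonomy_second_derivative_eq c (n t) (n' t) (m' t) (a t) (b t) (hm0 t))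
end

section
/- Picard-iteration increment bound: let T > 0, let K : [0,T]×[0,T] → ℂ, χ, Δ : [0,T] → ℂ be continuous, and let p, q : [0,T] → ℝ be continuous and nonnegative with |K(t,τ)| ≤ p(t) q(τ) whenever 0 ≤ τ ≤ t ≤ T. Set 𝒦 := sup_{0≤τ≤T} q(τ), 𝒦₀ := sup_{0≤τ≤T} p(τ)q(τ), φ(t) := ∫₀ᵗ |Δ(τ)| dτ, ψ(t) := ∫₀ᵗ |χ(τ)| dτ. Define iterates ε₀ := 0 and ε_{m+1}(t) := ∫₀ᵗ K(t,τ) ( χ(τ) ε_m(τ) + Δ(τ) ) dτ. Then for every m ≥ 0 and t ∈ [0,T]: |ε_{m+1}(t) − ε_m(t)| ≤ p(t) · 𝒦 · φ(t) · (𝒦₀ ψ(t))^m / m!. -/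
/-!
Subtracting consecutive iterates gives `δₘ₊₁(t) = ∫₀ᵗ K(t,τ) χ(τ) δₘ(τ) dτ`. Inserting the bound
for `δₘ` and using `|K(t,τ)| ≤ p(t) q(τ)`, `p(τ) q(τ) ≤ 𝒦₀` and `φ(τ) ≤ φ(t)` leaves
`∫₀ᵗ |χ(τ)| ψ(τ)ᵐ dτ = ψ(t)ᵐ⁺¹ / (m + 1)`, because `ψ' = |χ|`. The data are only continuous on
`[0, T]`; the iterates are continuous there, which makes the subtraction legitimate.
-/

open Set MeasureTheory intervalIntegral
open scoped Nat

theorem continuousOn_parametric_intervalIntegral_of_continuousOn {E : Type*}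
    [NormedAddCommGroup E] [NormedSpace ℝ E] {F : ℝ → ℝ → E} {a b : ℝ}
    (hF : ContinuousOn (fun z : ℝ × ℝ => F z.1 z.2) (Icc a b ×ˢ Icc a b)) :
    ContinuousOn (fun t => ∫ τ in a..t, F t τ) (Icc a b) := by
  rcases lt_or_ge b a with hba | hab
  · simp [Icc_eq_empty_of_lt hba]
  -- Clamping both variables to `[a, b]` extends `F` continuously to the whole plane.
  set c : ℝ → ℝ := fun x => projIcc a b hab x
  have hc : Continuous c := continuous_subtype_val.comp continuous_projIcc
  have hFc : Continuous (Function.uncurry fun t τ => F (c t) (c τ)) :=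
    hF.comp_continuous (hc.prodMap hc) fun z =>
      ⟨(projIcc a b hab z.1).2, (projIcc a b hab z.2).2⟩
  refine (continuous_parametric_intervalIntegral_of_continuous hFc continuous_id).continuousOn
    |>.congr fun t ht => integral_congr fun τ hτ => ?_
  rw [uIcc_of_le ht.1] at hτ
  simp [c, projIcc_of_mem hab ht, projIcc_of_mem hab ⟨hτ.1, hτ.2.trans ht.2⟩]

theorem integral_primitive_pow_mul {g : ℝ → ℝ} {a b : ℝ} (hab : a ≤ b)
    (hg : ContinuousOn g (Icc a b)) (m : ℕ) :
    ∫ x in a..b, (∫ s in a..x, g s) ^ m * g x = (∫ s in a..b, g s) ^ (m + 1) / (m + 1) := by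
  have hderiv : ∀ x ∈ Ioo a b, HasDerivAt (fun u => ∫ s in a..u, g s) (g x) x := fun x hx =>
    integral_hasDerivAt_right
      ((hg.mono (Icc_subset_Icc_right hx.2.le)).intervalIntegrable_of_Icc hx.1.le)
      ((hg.mono Ioo_subset_Icc_self).stronglyMeasurableAtFilter isOpen_Ioo x hx)
      (hg.continuousAt (Icc_mem_nhds hx.1 hx.2))
  have hg' : ContinuousOn g (uIcc a b) := by rwa [uIcc_of_le hab]
  have := integral_comp_mul_deriv'' (a := a) (b := b) (f' := g) (g := fun u => u ^ m)
    (continuousOn_primitive_interval (hg'.integrableOn_compact isCompact_uIcc))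
    (by simpa [hab] using fun x hx => (hderiv x hx).hasDerivWithinAt) hg'
    (continuous_pow m).continuousOn
  simpa [integral_pow] using this

section PicardIteration

variable {T : ℝ} {K : ℝ → ℝ → ℂ} {χ Δ : ℝ → ℂ} {p q : ℝ → ℝ} {ε : ℕ → ℝ → ℂ}

theorem continuousOn_picard_iterate
    (hKc : ContinuousOn (fun z : ℝ × ℝ => K z.1 z.2) (Icc 0 T ×ˢ Icc 0 T))
    (hχc : ContinuousOn χ (Icc 0 T)) (hΔc : ContinuousOn Δ (Icc 0 T))
    (hε0 : ∀ t, ε 0 t = 0)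
    (hεs : ∀ m t, ε (m + 1) t = ∫ τ in (0:ℝ)..t, K t τ * (χ τ * ε m τ + Δ τ)) (m : ℕ) :
    ContinuousOn (ε m) (Icc 0 T) := by
  induction m with
  | zero => rw [funext hε0]; exact continuousOn_const
  | succ m ih =>
    rw [funext (hεs m)]
    exact continuousOn_parametric_intervalIntegral_of_continuousOn
      (hKc.mul (((hχc.mul ih).add hΔc).comp continuous_snd.continuousOn fun z hz => hz.2))

theorem picard_iterate_succ_sub
    (hKc : ContinuousOn (fun z : ℝ × ℝ => K z.1 z.2) (Icc 0 T ×ˢ Icc 0 T))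
    (hχc : ContinuousOn χ (Icc 0 T)) (hΔc : ContinuousOn Δ (Icc 0 T))
    (hε0 : ∀ t, ε 0 t = 0)
    (hεs : ∀ m t, ε (m + 1) t = ∫ τ in (0:ℝ)..t, K t τ * (χ τ * ε m τ + Δ τ))
    {t : ℝ} (ht : t ∈ Icc 0 T) (m : ℕ) :
    ε (m + 1 + 1) t - ε (m + 1) t = ∫ τ in (0:ℝ)..t, K t τ * (χ τ * (ε (m + 1) τ - ε m τ)) := by
  have hsub : Icc 0 t ⊆ Icc 0 T := Icc_subset_Icc_right ht.2
  have hK : ContinuousOn (K t) (Icc 0 t) :=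
    hKc.comp (continuousOn_const.prodMk continuousOn_id) fun τ hτ => ⟨ht, hsub hτ⟩
  have hint (n : ℕ) : IntervalIntegrable (fun τ => K t τ * (χ τ * ε n τ + Δ τ)) volume 0 t :=
    (hK.mul (((hχc.mul (continuousOn_picard_iterate hKc hχc hΔc hε0 hεs n)).add hΔc).mono
      hsub)).intervalIntegrable_of_Icc ht.1
  rw [hεs (m + 1), hεs m, ← integral_sub (hint _) (hint _)]
  congr 1 with τ
  ring

theorem norm_picard_increment_zero_le (hΔc : ContinuousOn Δ (Icc 0 T))
    (hp0 : ∀ t ∈ Icc 0 T, 0 ≤ p t)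
    (hKb : ∀ t τ : ℝ, 0 ≤ τ → τ ≤ t → t ≤ T → ‖K t τ‖ ≤ p t * q τ)
    (hε0 : ∀ t, ε 0 t = 0)
    (hεs : ∀ m t, ε (m + 1) t = ∫ τ in (0:ℝ)..t, K t τ * (χ τ * ε m τ + Δ τ))
    {𝒦 : ℝ} (hq𝒦 : ∀ τ ∈ Icc 0 T, q τ ≤ 𝒦) :
    ∀ t ∈ Icc 0 T, ‖ε 1 t - ε 0 t‖ ≤ p t * 𝒦 * ∫ τ in (0:ℝ)..t, ‖Δ τ‖ := by
  intro t ht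
  simp only [hεs, hε0, mul_zero, zero_add, sub_zero]
  rw [← intervalIntegral.integral_const_mul]
  refine intervalIntegral.norm_integral_le_of_norm_le ht.1 (ae_of_all _ fun τ hτ => ?_)
    (((hΔc.norm.mono (Icc_subset_Icc_right ht.2)).intervalIntegrable_of_Icc ht.1).const_mul _)
  rw [norm_mul]
  gcongr
  exact (hKb t τ hτ.1.le hτ.2 ht.2).trans
    (mul_le_mul_of_nonneg_left (hq𝒦 τ ⟨hτ.1.le, hτ.2.trans ht.2⟩) (hp0 t ht))

theorem norm_kernel_mul_le_of_norm_le (hΔc : ContinuousOn Δ (Icc 0 T))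
    (hp0 : ∀ t ∈ Icc 0 T, 0 ≤ p t) (hq0 : ∀ t ∈ Icc 0 T, 0 ≤ q t)
    (hKb : ∀ t τ : ℝ, 0 ≤ τ → τ ≤ t → t ≤ T → ‖K t τ‖ ≤ p t * q τ)
    {𝒦 𝒦₀ : ℝ} (h𝒦 : 0 ≤ 𝒦) (h𝒦₀ : 0 ≤ 𝒦₀) (hpq𝒦₀ : ∀ τ ∈ Icc 0 T, p τ * q τ ≤ 𝒦₀)
    {t τ : ℝ} (ht : t ∈ Icc 0 T) (hτ : τ ∈ Icc 0 t) {m : ℕ} {z : ℂ}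
    (hz : ‖z‖ ≤ p τ * 𝒦 * (∫ s in (0:ℝ)..τ, ‖Δ s‖) * (𝒦₀ * ∫ s in (0:ℝ)..τ, ‖χ s‖) ^ m / m !) :
    ‖K t τ * (χ τ * z)‖ ≤ p t * 𝒦 * (∫ s in (0:ℝ)..t, ‖Δ s‖) * 𝒦₀ ^ (m + 1) / m ! *
      ((∫ s in (0:ℝ)..τ, ‖χ s‖) ^ m * ‖χ τ‖) := by
  have hτT : τ ∈ Icc 0 T := ⟨hτ.1, hτ.2.trans ht.2⟩
  set Φ : ℝ → ℝ := fun s => ∫ r in (0:ℝ)..s, ‖Δ r‖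
  set Ψ : ℝ → ℝ := fun s => ∫ r in (0:ℝ)..s, ‖χ r‖
  have hΦ : Φ τ ≤ Φ t := integral_mono_interval le_rfl hτ.1 hτ.2
    (ae_of_all _ fun _ => norm_nonneg _)
    ((hΔc.norm.mono (Icc_subset_Icc_right ht.2)).intervalIntegrable_of_Icc ht.1)
  have hΦ0 : 0 ≤ Φ τ := integral_nonneg hτ.1 fun _ _ => norm_nonneg _
  have hΨ0 : 0 ≤ Ψ τ := integral_nonneg hτ.1 fun _ _ => norm_nonneg _
  have hpt := hp0 t ht
  rw [norm_mul, norm_mul]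
  calc ‖K t τ‖ * (‖χ τ‖ * ‖z‖)
      ≤ p t * q τ * (‖χ τ‖ * (p τ * 𝒦 * Φ τ * (𝒦₀ * Ψ τ) ^ m / m !)) := by
        gcongr
        · exact mul_nonneg hpt (hq0 τ hτT)
        · exact hKb t τ hτ.1 hτ.2 ht.2
    _ = p t * 𝒦 * ‖χ τ‖ * (𝒦₀ * Ψ τ) ^ m / m ! * (p τ * q τ * Φ τ) := by ring
    _ ≤ p t * 𝒦 * ‖χ τ‖ * (𝒦₀ * Ψ τ) ^ m / m ! * (𝒦₀ * Φ t) := by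
        gcongr
        exact hpq𝒦₀ τ hτT
    _ = p t * 𝒦 * Φ t * 𝒦₀ ^ (m + 1) / m ! * (Ψ τ ^ m * ‖χ τ‖) := by ring

theorem norm_picard_increment_succ_le
    (hKc : ContinuousOn (fun z : ℝ × ℝ => K z.1 z.2) (Icc 0 T ×ˢ Icc 0 T))
    (hχc : ContinuousOn χ (Icc 0 T)) (hΔc : ContinuousOn Δ (Icc 0 T))
    (hp0 : ∀ t ∈ Icc 0 T, 0 ≤ p t) (hq0 : ∀ t ∈ Icc 0 T, 0 ≤ q t)
    (hKb : ∀ t τ : ℝ, 0 ≤ τ → τ ≤ t → t ≤ T → ‖K t τ‖ ≤ p t * q τ)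
    (hε0 : ∀ t, ε 0 t = 0)
    (hεs : ∀ m t, ε (m + 1) t = ∫ τ in (0:ℝ)..t, K t τ * (χ τ * ε m τ + Δ τ))
    {𝒦 𝒦₀ : ℝ} (hq𝒦 : ∀ τ ∈ Icc 0 T, q τ ≤ 𝒦) (hpq𝒦₀ : ∀ τ ∈ Icc 0 T, p τ * q τ ≤ 𝒦₀)
    {m : ℕ} (ih : ∀ t ∈ Icc 0 T, ‖ε (m + 1) t - ε m t‖ ≤
      p t * 𝒦 * (∫ τ in (0:ℝ)..t, ‖Δ τ‖) * (𝒦₀ * ∫ τ in (0:ℝ)..t, ‖χ τ‖) ^ m / m !) :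
    ∀ t ∈ Icc 0 T, ‖ε (m + 1 + 1) t - ε (m + 1) t‖ ≤
      p t * 𝒦 * (∫ τ in (0:ℝ)..t, ‖Δ τ‖) * (𝒦₀ * ∫ τ in (0:ℝ)..t, ‖χ τ‖) ^ (m + 1) / (m + 1)! := by
  intro t ht
  have hsub : Icc 0 t ⊆ Icc 0 T := Icc_subset_Icc_right ht.2
  have hχt : ContinuousOn (fun τ => ‖χ τ‖) (uIcc 0 t) := by
    rw [uIcc_of_le ht.1]; exact hχc.norm.mono hsub
  have h𝒦 : 0 ≤ 𝒦 := (hq0 t ht).trans (hq𝒦 t ht)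
  have h𝒦₀ : 0 ≤ 𝒦₀ := (mul_nonneg (hp0 t ht) (hq0 t ht)).trans (hpq𝒦₀ t ht)
  set Ψ : ℝ → ℝ := fun s => ∫ τ in (0:ℝ)..s, ‖χ τ‖
  set C := p t * 𝒦 * (∫ τ in (0:ℝ)..t, ‖Δ τ‖) * 𝒦₀ ^ (m + 1) / (m ! : ℝ) with hC
  have hint : IntervalIntegrable (fun τ => Ψ τ ^ m * ‖χ τ‖) volume 0 t :=
    (((continuousOn_primitive_interval (hχt.integrableOn_compact isCompact_uIcc)).pow m).mul
      hχt).intervalIntegrable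
  rw [picard_iterate_succ_sub hKc hχc hΔc hε0 hεs ht]
  calc _ ≤ ∫ τ in (0:ℝ)..t, C * (Ψ τ ^ m * ‖χ τ‖) :=
        intervalIntegral.norm_integral_le_of_norm_le ht.1 (ae_of_all _ fun τ hτ =>
          norm_kernel_mul_le_of_norm_le hΔc hp0 hq0 hKb h𝒦 h𝒦₀ hpq𝒦₀ ht (Ioc_subset_Icc_self hτ)
            (ih τ ⟨hτ.1.le, hτ.2.trans ht.2⟩)) (hint.const_mul C)
    _ = C * (Ψ t ^ (m + 1) / (m + 1)) := by
        rw [intervalIntegral.integral_const_mul,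
          integral_primitive_pow_mul ht.1 (hχc.norm.mono hsub)]
    _ = _ := by
        rw [hC, Nat.factorial_succ]; push_cast; field_simp; ring

end PicardIteration

theorem picard_increment_bound_general (T : ℝ)
    (K : ℝ → ℝ → ℂ) (χ Δ : ℝ → ℂ) (p q : ℝ → ℝ)
    (hKc : ContinuousOn (fun z : ℝ × ℝ => K z.1 z.2) (Set.Icc 0 T ×ˢ Set.Icc 0 T))
    (hχc : ContinuousOn χ (Set.Icc 0 T)) (hΔc : ContinuousOn Δ (Set.Icc 0 T))
    (hpc : ContinuousOn p (Set.Icc 0 T)) (hqc : ContinuousOn q (Set.Icc 0 T))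
    (hp0 : ∀ t ∈ Set.Icc (0:ℝ) T, 0 ≤ p t) (hq0 : ∀ t ∈ Set.Icc (0:ℝ) T, 0 ≤ q t)
    (hKb : ∀ t τ : ℝ, 0 ≤ τ → τ ≤ t → t ≤ T → ‖K t τ‖ ≤ p t * q τ)
    (ε : ℕ → ℝ → ℂ)
    (hε0 : ∀ t : ℝ, ε 0 t = 0)
    (hεs : ∀ (m : ℕ) (t : ℝ),
      ε (m + 1) t = ∫ τ in (0:ℝ)..t, K t τ * (χ τ * ε m τ + Δ τ)) :
    ∀ (m : ℕ), ∀ t ∈ Set.Icc (0:ℝ) T,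
      ‖ε (m + 1) t - ε m t‖ ≤
        p t * sSup (q '' Set.Icc 0 T) * (∫ τ in (0:ℝ)..t, ‖Δ τ‖) *
          (sSup ((fun τ => p τ * q τ) '' Set.Icc 0 T) *
            ∫ τ in (0:ℝ)..t, ‖χ τ‖) ^ m / (Nat.factorial m) := by
  have hq𝒦 : ∀ τ ∈ Icc 0 T, q τ ≤ sSup (q '' Icc 0 T) := fun τ hτ =>
    le_csSup (isCompact_Icc.image_of_continuousOn hqc).bddAbove (mem_image_of_mem q hτ)
  have hpq𝒦₀ : ∀ τ ∈ Icc 0 T, p τ * q τ ≤ sSup ((fun τ => p τ * q τ) '' Icc 0 T) :=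
    fun τ hτ => le_csSup (isCompact_Icc.image_of_continuousOn (hpc.mul hqc)).bddAbove
      (mem_image_of_mem (fun τ => p τ * q τ) hτ)
  intro m
  induction m with
  | zero => simpa using norm_picard_increment_zero_le hΔc hp0 hKb hε0 hεs hq𝒦
  | succ m ih =>
    exact norm_picard_increment_succ_le hKc hχc hΔc hp0 hq0 hKb hε0 hεs hq𝒦 hpq𝒦₀ ih

/-- Picard-iteration increment bound: with `|K(t,τ)| ≤ p(t)q(τ)` for `0 ≤ τ ≤ t ≤ T`,
`𝒦 = sup q`, `𝒦₀ = sup pq`, `φ(t) = ∫₀ᵗ|Δ|`, `ψ(t) = ∫₀ᵗ|χ|`, the iterates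
`ε₀ = 0`, `ε_{m+1}(t) = ∫₀ᵗ K(t,τ)(χ(τ)ε_m(τ)+Δ(τ))dτ` satisfy
`|ε_{m+1}(t) − ε_m(t)| ≤ p(t)·𝒦·φ(t)·(𝒦₀ψ(t))^m/m!`. -/
theorem picard_increment_bound (T : ℝ) (hT : 0 < T)
    (K : ℝ → ℝ → ℂ) (χ Δ : ℝ → ℂ) (p q : ℝ → ℝ)
    (hKc : ContinuousOn (fun z : ℝ × ℝ => K z.1 z.2) (Set.Icc 0 T ×ˢ Set.Icc 0 T))
    (hχc : ContinuousOn χ (Set.Icc 0 T)) (hΔc : ContinuousOn Δ (Set.Icc 0 T))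
    (hpc : ContinuousOn p (Set.Icc 0 T)) (hqc : ContinuousOn q (Set.Icc 0 T))
    (hp0 : ∀ t ∈ Set.Icc (0:ℝ) T, 0 ≤ p t) (hq0 : ∀ t ∈ Set.Icc (0:ℝ) T, 0 ≤ q t)
    (hKb : ∀ t τ : ℝ, 0 ≤ τ → τ ≤ t → t ≤ T → ‖K t τ‖ ≤ p t * q τ)
    (ε : ℕ → ℝ → ℂ)
    (hε0 : ∀ t : ℝ, ε 0 t = 0)
    (hεs : ∀ (m : ℕ) (t : ℝ),
      ε (m + 1) t = ∫ τ in (0:ℝ)..t, K t τ * (χ τ * ε m τ + Δ τ)) :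
    ∀ (m : ℕ), ∀ t ∈ Set.Icc (0:ℝ) T,
      ‖ε (m + 1) t - ε m t‖ ≤
        p t * sSup (q '' Set.Icc 0 T) * (∫ τ in (0:ℝ)..t, ‖Δ τ‖) *
          (sSup ((fun τ => p τ * q τ) '' Set.Icc 0 T) *
            ∫ τ in (0:ℝ)..t, ‖χ τ‖) ^ m / (Nat.factorial m) :=
  picard_increment_bound_general T K χ Δ p q hKc hχc hΔc hpc hqc hp0 hq0 hKb ε hε0 hεs
end

section
/- Picard-iteration uniform bound: with the hypotheses and notation of the Picard-iteration increment bound (continuous K, χ, Δ on [0,T], |K(t,τ)| ≤ p(t)q(τ) for 0 ≤ τ ≤ t ≤ T, 𝒦 := sup q, 𝒦₀ := sup pq, φ(t) := ∫₀ᵗ|Δ|, ψ(t) := ∫₀ᵗ|χ|, iterates ε₀ := 0 and ε_{m+1}(t) := ∫₀ᵗ K(t,τ)(χ(τ)ε_m(τ) + Δ(τ)) dτ), every iterate satisfies |ε_m(t)| ≤ p(t) · 𝒦 · φ(t) · exp( 𝒦₀ ψ(t) ) for all m ≥ 0 and t ∈ [0,T]. -/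
/-!
The bound `B(t) = p(t) 𝒦 φ(t) E(t)` with `E = exp (𝒦₀ ψ)` is reproduced by one Picard step.
Using `|K(t,τ)| ≤ p(t) q(τ)`, `q ≤ 𝒦`, `p q ≤ 𝒦₀` and `φ(τ) ≤ φ(t)`, the integrand of
`ε_{m+1}(t)` is dominated by `p(t) 𝒦 (φ(t) 𝒦₀ |χ| E + |Δ|)`; since `𝒦₀ |χ| E = E'`, its integral
is `p(t) 𝒦 (φ(t) (E(t) - 1) + φ(t)) = B(t)`. Induction on `m` concludes.
-/

open MeasureTheory Set intervalIntegral Real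

section Primitive

variable {E : Type*} [NormedAddCommGroup E] [NormedSpace ℝ E] {f : ℝ → E} {a b : ℝ}

theorem hasDerivAt_integral_of_continuousOn [CompleteSpace E] {x : ℝ}
    (hf : ContinuousOn f (Icc a b)) (hx : x ∈ Ioo a b) :
    HasDerivAt (fun u => ∫ y in a..u, f y) (f x) x := by
  have : Fact (x ∈ Icc a b) := ⟨Ioo_subset_Icc_self hx⟩
  refine (integral_hasDerivWithinAt_right (t := Icc a b) ?_
    (hf.stronglyMeasurableAtFilter_nhdsWithin measurableSet_Icc x)
    (hf x (Ioo_subset_Icc_self hx))).hasDerivAt (Icc_mem_nhds hx.1 hx.2)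
  exact (hf.mono (uIcc_subset_Icc (left_mem_Icc.2 (hx.1.le.trans hx.2.le))
    (Ioo_subset_Icc_self hx))).intervalIntegrable

theorem continuousOn_primitive_Icc (hab : a ≤ b) (hf : ContinuousOn f (Icc a b)) :
    ContinuousOn (fun x => ∫ y in a..x, f y) (Icc a b) := by
  simpa only [uIcc_of_le hab] using
    continuousOn_primitive_interval' (hf.intervalIntegrable_of_Icc hab) left_mem_uIcc

end Primitive

theorem integral_mul_exp_integral {f : ℝ → ℝ} {a b : ℝ} (hab : a ≤ b)
    (hf : ContinuousOn f (Icc a b)) (c : ℝ) :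
    ∫ x in a..b, c * f x * exp (c * ∫ y in a..x, f y) = exp (c * ∫ x in a..b, f x) - 1 := by
  have hexp : ContinuousOn (fun x => exp (c * ∫ y in a..x, f y)) (Icc a b) :=
    continuous_exp.comp_continuousOn (continuousOn_const.mul (continuousOn_primitive_Icc hab hf))
  have hderiv : ∀ x ∈ Ioo a b, HasDerivWithinAt (fun x => exp (c * ∫ y in a..x, f y))
      (c * f x * exp (c * ∫ y in a..x, f y)) (Ioi x) x := fun x hx =>
    (((hasDerivAt_integral_of_continuousOn hf hx).const_mul c).exp.congr_deriv
      (by ring)).hasDerivWithinAt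
  rw [integral_eq_sub_of_hasDeriv_right_of_le hab hexp hderiv
    (((continuousOn_const.mul hf).mul hexp).intervalIntegrable_of_Icc hab)]
  simp

variable {𝕜 : Type*} [RCLike 𝕜]

theorem norm_integral_picard_step_le {a t 𝒦 𝒦₀ : ℝ} {K : ℝ → ℝ → 𝕜} {χ Δ e : ℝ → 𝕜}
    {p q : ℝ → ℝ} (hat : a ≤ t) (hχ : ContinuousOn χ (Icc a t)) (hΔ : ContinuousOn Δ (Icc a t))
    (hpt : 0 ≤ p t) (h𝒦 : 0 ≤ 𝒦) (h𝒦₀ : 0 ≤ 𝒦₀)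
    (hq : ∀ τ ∈ Icc a t, q τ ≤ 𝒦) (hpq : ∀ τ ∈ Icc a t, p τ * q τ ≤ 𝒦₀)
    (hK : ∀ τ ∈ Icc a t, ‖K t τ‖ ≤ p t * q τ)
    (he : ∀ τ ∈ Icc a t, ‖e τ‖ ≤
      p τ * 𝒦 * (∫ s in a..τ, ‖Δ s‖) * exp (𝒦₀ * ∫ s in a..τ, ‖χ s‖)) :
    ‖∫ τ in a..t, K t τ * (χ τ * e τ + Δ τ)‖ ≤
      p t * 𝒦 * (∫ s in a..t, ‖Δ s‖) * exp (𝒦₀ * ∫ s in a..t, ‖χ s‖) := by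
  set φ : ℝ → ℝ := fun τ => ∫ s in a..τ, ‖Δ s‖
  set E : ℝ → ℝ := fun τ => exp (𝒦₀ * ∫ s in a..τ, ‖χ s‖)
  have hφ_nonneg : ∀ τ ∈ Icc a t, 0 ≤ φ τ := fun τ hτ =>
    integral_nonneg hτ.1 fun _ _ => norm_nonneg _
  have hφ_mono : ∀ τ ∈ Icc a t, φ τ ≤ φ t := fun τ hτ =>
    integral_mono_interval le_rfl hτ.1 hτ.2 (Filter.Eventually.of_forall fun _ => norm_nonneg _)
      (hΔ.norm.intervalIntegrable_of_Icc hat)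
  have hpoint : ∀ τ ∈ Ioc a t, ‖K t τ * (χ τ * e τ + Δ τ)‖ ≤
      p t * 𝒦 * (φ t * (𝒦₀ * ‖χ τ‖ * E τ) + ‖Δ τ‖) := fun τ hτ' => by
    have hτ := Ioc_subset_Icc_self hτ'
    calc ‖K t τ * (χ τ * e τ + Δ τ)‖
        ≤ ‖K t τ‖ * (‖χ τ‖ * ‖e τ‖ + ‖Δ τ‖) := by
          rw [norm_mul]; gcongr; exact (norm_add_le _ _).trans_eq (by rw [norm_mul])
      _ ≤ p t * q τ * (‖χ τ‖ * (p τ * 𝒦 * φ τ * E τ) + ‖Δ τ‖) := by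
          gcongr
          exacts [(norm_nonneg _).trans (hK τ hτ), hK τ hτ, he τ hτ]
      _ = p t * ((p τ * q τ) * φ τ * (𝒦 * ‖χ τ‖ * E τ) + q τ * ‖Δ τ‖) := by ring
      _ ≤ p t * (𝒦₀ * φ t * (𝒦 * ‖χ τ‖ * E τ) + 𝒦 * ‖Δ τ‖) := by
          gcongr
          exacts [hφ_nonneg τ hτ, hpq τ hτ, hφ_mono τ hτ, hq τ hτ]
      _ = p t * 𝒦 * (φ t * (𝒦₀ * ‖χ τ‖ * E τ) + ‖Δ τ‖) := by ring
  have hχE : ContinuousOn (fun τ => 𝒦₀ * ‖χ τ‖ * E τ) (Icc a t) :=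
    (continuousOn_const.mul hχ.norm).mul
      (continuous_exp.comp_continuousOn
        (continuousOn_const.mul (continuousOn_primitive_Icc hat hχ.norm)))
  have hχE_int := (hχE.intervalIntegrable_of_Icc (μ := volume) hat).const_mul (φ t)
  have hΔ_int := hΔ.norm.intervalIntegrable_of_Icc (μ := volume) hat
  calc ‖∫ τ in a..t, K t τ * (χ τ * e τ + Δ τ)‖
      ≤ ∫ τ in a..t, p t * 𝒦 * (φ t * (𝒦₀ * ‖χ τ‖ * E τ) + ‖Δ τ‖) :=
        intervalIntegral.norm_integral_le_of_norm_le hat (Filter.Eventually.of_forall hpoint)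
          ((hχE_int.add hΔ_int).const_mul _)
    _ = p t * 𝒦 * (φ t * (E t - 1) + φ t) := by
        rw [intervalIntegral.integral_const_mul, intervalIntegral.integral_add hχE_int hΔ_int,
          intervalIntegral.integral_const_mul, integral_mul_exp_integral hat hχ.norm]
    _ = p t * 𝒦 * φ t * E t := by ring

theorem picard_uniform_bound_general (T : ℝ)
    (K : ℝ → ℝ → ℂ) (χ Δ : ℝ → ℂ) (p q : ℝ → ℝ)
    (hχc : ContinuousOn χ (Set.Icc 0 T)) (hΔc : ContinuousOn Δ (Set.Icc 0 T))
    (hpc : ContinuousOn p (Set.Icc 0 T)) (hqc : ContinuousOn q (Set.Icc 0 T))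
    (hp0 : ∀ t ∈ Set.Icc (0:ℝ) T, 0 ≤ p t) (hq0 : ∀ t ∈ Set.Icc (0:ℝ) T, 0 ≤ q t)
    (hKb : ∀ t τ : ℝ, 0 ≤ τ → τ ≤ t → t ≤ T → ‖K t τ‖ ≤ p t * q τ)
    (ε : ℕ → ℝ → ℂ)
    (hε0 : ∀ t : ℝ, ε 0 t = 0)
    (hεs : ∀ (m : ℕ) (t : ℝ),
      ε (m + 1) t = ∫ τ in (0:ℝ)..t, K t τ * (χ τ * ε m τ + Δ τ)) :
    ∀ (m : ℕ), ∀ t ∈ Set.Icc (0:ℝ) T,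
      ‖ε m t‖ ≤
        p t * sSup (q '' Set.Icc 0 T) * (∫ τ in (0:ℝ)..t, ‖Δ τ‖) *
          Real.exp (sSup ((fun τ => p τ * q τ) '' Set.Icc 0 T) *
            ∫ τ in (0:ℝ)..t, ‖χ τ‖) := by
  have hq_le : ∀ τ ∈ Icc 0 T, q τ ≤ sSup (q '' Icc 0 T) :=
    fun _ hτ => hqc.le_sSup_image_Icc hτ
  have hpq_le : ∀ τ ∈ Icc 0 T, p τ * q τ ≤ sSup ((fun τ => p τ * q τ) '' Icc 0 T) :=
    fun _ hτ => (hpc.mul hqc).le_sSup_image_Icc hτ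
  intro m
  induction m with
  | zero =>
    intro t ht
    rw [hε0, norm_zero]
    exact mul_nonneg (mul_nonneg (mul_nonneg (hp0 t ht) ((hq0 t ht).trans (hq_le t ht)))
      (integral_nonneg ht.1 fun _ _ => norm_nonneg _)) (exp_nonneg _)
  | succ m ih =>
    intro t ht
    have hsub : Icc 0 t ⊆ Icc 0 T := Icc_subset_Icc_right ht.2
    rw [hεs]
    exact norm_integral_picard_step_le ht.1 (hχc.mono hsub) (hΔc.mono hsub) (hp0 t ht)
      ((hq0 t ht).trans (hq_le t ht)) ((mul_nonneg (hp0 t ht) (hq0 t ht)).trans (hpq_le t ht))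
      (fun τ hτ => hq_le τ (hsub hτ)) (fun τ hτ => hpq_le τ (hsub hτ))
      (fun τ hτ => hKb t τ hτ.1 hτ.2 ht.2) (fun τ hτ => ih τ (hsub hτ))

/-- Picard-iteration uniform bound: with `|K(t,τ)| ≤ p(t)q(τ)` for `0 ≤ τ ≤ t ≤ T`,
`𝒦 = sup q`, `𝒦₀ = sup pq`, `φ(t) = ∫₀ᵗ|Δ|`, `ψ(t) = ∫₀ᵗ|χ|`, every Picard iterate
satisfies `|ε_m(t)| ≤ p(t)·𝒦·φ(t)·exp(𝒦₀ψ(t))`. -/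
theorem picard_uniform_bound (T : ℝ) (hT : 0 < T)
    (K : ℝ → ℝ → ℂ) (χ Δ : ℝ → ℂ) (p q : ℝ → ℝ)
    (hKc : ContinuousOn (fun z : ℝ × ℝ => K z.1 z.2) (Set.Icc 0 T ×ˢ Set.Icc 0 T))
    (hχc : ContinuousOn χ (Set.Icc 0 T)) (hΔc : ContinuousOn Δ (Set.Icc 0 T))
    (hpc : ContinuousOn p (Set.Icc 0 T)) (hqc : ContinuousOn q (Set.Icc 0 T))
    (hp0 : ∀ t ∈ Set.Icc (0:ℝ) T, 0 ≤ p t) (hq0 : ∀ t ∈ Set.Icc (0:ℝ) T, 0 ≤ q t)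
    (hKb : ∀ t τ : ℝ, 0 ≤ τ → τ ≤ t → t ≤ T → ‖K t τ‖ ≤ p t * q τ)
    (ε : ℕ → ℝ → ℂ)
    (hε0 : ∀ t : ℝ, ε 0 t = 0)
    (hεs : ∀ (m : ℕ) (t : ℝ),
      ε (m + 1) t = ∫ τ in (0:ℝ)..t, K t τ * (χ τ * ε m τ + Δ τ)) :
    ∀ (m : ℕ), ∀ t ∈ Set.Icc (0:ℝ) T,
      ‖ε m t‖ ≤
        p t * sSup (q '' Set.Icc 0 T) * (∫ τ in (0:ℝ)..t, ‖Δ τ‖) *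
          Real.exp (sSup ((fun τ => p τ * q τ) '' Set.Icc 0 T) *
            ∫ τ in (0:ℝ)..t, ‖χ τ‖) :=
  picard_uniform_bound_general T K χ Δ p q hχc hΔc hpc hqc hp0 hq0 hKb ε hε0 hεs
end

section
/- Bound on the variation-of-constants kernel for purely imaginary κ: let c ∈ ℝ, κ := ic, let α : [0,T] → ℂ be continuous with κ + (1/2)α(τ) ≠ 0 for all τ ∈ [0,T], and define Z_σ(s) := exp( σ( κ s + (1/2)∫₀ˢ α(u) du ) ) / ( κ + (1/2)α(s) )^{1/2} for σ = ±1, using the principal complex square root, and K(t,τ) := (1/2)( Z_{+}(t) Z_{−}(τ) − Z_{−}(t) Z_{+}(τ) ). Then for all 0 ≤ τ ≤ t ≤ T, |K(t,τ)| ≤ λ(t)⁻¹ · exp( (1/2)∫₀ᵗ |α(s)| ds ) · exp( −(1/2)∫₀^τ |α(s)| ds ), where λ(t) := inf_{0≤u≤t} |κ + (1/2)α(u)|. -/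
/-! With the phase `E(s) = κ s + ½∫₀ˢ α` and `g = κ + α/2`, the kernel is
`K(t,τ) = sinh(E(t) - E(τ)) / (√g(t) √g(τ))`. Since `κ` is purely imaginary,
`Re(E(t) - E(τ)) = ½ Re ∫_τ^t α`, which is at most `½ ∫_τ^t |α|` in absolute value, and
`|sinh w| ≤ exp |Re w|`; the denominator has modulus at least `λ(t)`, which is positive by
compactness of `[0,t]`. -/

open Complex Set intervalIntegral MeasureTheory

theorem Complex.norm_sinh_le_exp_abs_re (z : ℂ) : ‖sinh z‖ ≤ Real.exp |z.re| := by
  have h₁ : Real.exp z.re ≤ Real.exp |z.re| := Real.exp_le_exp.2 (le_abs_self _)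
  have h₂ : Real.exp (-z.re) ≤ Real.exp |z.re| := Real.exp_le_exp.2 (neg_le_abs _)
  calc ‖sinh z‖ = ‖exp z - exp (-z)‖ / 2 := by rw [sinh, norm_div, Complex.norm_two]
    _ ≤ (‖exp z‖ + ‖exp (-z)‖) / 2 := by gcongr; exact norm_sub_le _ _
    _ ≤ Real.exp |z.re| := by rw [norm_exp, norm_exp, neg_re]; linarith

theorem Complex.norm_cpow_one_half (z : ℂ) : ‖z ^ ((1 : ℂ) / 2)‖ = √‖z‖ := by
  rw [Real.sqrt_eq_rpow, ← norm_cpow_real]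
  norm_num

theorem half_mul_exp_div_sub_eq_sinh_div (a b r₁ r₂ : ℂ) :
    (1 / 2) * (exp a / r₁ * (exp (-b) / r₂) - exp (-a) / r₁ * (exp b / r₂)) =
      sinh (a - b) / (r₁ * r₂) := by
  rw [sinh, neg_sub, exp_sub, exp_sub, exp_neg, exp_neg]
  ring

theorem IsCompact.sInf_image_pos {X : Type*} [TopologicalSpace X] {s : Set X} {f : X → ℝ}
    (hs : IsCompact s) (hne : s.Nonempty) (hf : ContinuousOn f s) (hpos : ∀ x ∈ s, 0 < f x) :
    0 < sInf (f '' s) := by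
  obtain ⟨x, hx, hxeq⟩ := hs.exists_sInf_image_eq hne hf
  exact hxeq ▸ hpos x hx

theorem norm_integral_sub_integral_le {E : Type*} [NormedAddCommGroup E] [NormedSpace ℝ E]
    {f : ℝ → E} {a b c : ℝ} (hab : IntervalIntegrable f volume a b)
    (hac : IntervalIntegrable f volume a c) (hbc : b ≤ c) :
    ‖(∫ x in a..c, f x) - ∫ x in a..b, f x‖ ≤
      (∫ x in a..c, ‖f x‖) - ∫ x in a..b, ‖f x‖ := by
  rw [integral_interval_sub_left hac hab, integral_interval_sub_left hac.norm hab.norm]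
  exact norm_integral_le_integral_norm hbc

theorem le_sqrt_mul_sqrt_of_le {l a b : ℝ} (hl : 0 ≤ l) (ha : l ≤ a) (hb : l ≤ b) :
    l ≤ √a * √b := by
  rw [← Real.sqrt_mul (hl.trans ha), Real.le_sqrt hl (by nlinarith), sq]
  exact mul_le_mul ha hb hl (hl.trans ha)

noncomputable def phase (κ : ℂ) (α : ℝ → ℂ) (s : ℝ) : ℂ :=
  κ * s + (1 / 2) * ∫ u in (0:ℝ)..s, α u

theorem abs_re_phase_sub_le (c : ℝ) {α : ℝ → ℂ} {τ t : ℝ}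
    (hτ : IntervalIntegrable α volume 0 τ) (ht : IntervalIntegrable α volume 0 t)
    (hτt : τ ≤ t) :
    |(phase (I * c) α t - phase (I * c) α τ).re| ≤
      (1 / 2) * ((∫ s in (0:ℝ)..t, ‖α s‖) - ∫ s in (0:ℝ)..τ, ‖α s‖) := by
  have hre : (phase (I * c) α t - phase (I * c) α τ).re =
      (1 / 2) * ((∫ u in (0:ℝ)..t, α u) - ∫ u in (0:ℝ)..τ, α u).re := by
    simp [phase, mul_re, ← mul_sub]
  rw [hre, abs_mul, abs_of_pos (by norm_num : (0 : ℝ) < 1 / 2)]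
  gcongr
  exact (abs_re_le_norm _).trans (norm_integral_sub_integral_le hτ ht hτt)

/-- Bound on the variation-of-constants kernel for purely imaginary `κ = ic`:
with `Z_±(s) = exp(±(κs + (1/2)∫₀ˢα)) / (κ + α(s)/2)^{1/2}` and
`K(t,τ) = (1/2)(Z₊(t)Z₋(τ) − Z₋(t)Z₊(τ))`, one has
`|K(t,τ)| ≤ λ(t)⁻¹ exp((1/2)∫₀ᵗ|α|) exp(−(1/2)∫₀^τ|α|)` for `0 ≤ τ ≤ t ≤ T`,
where `λ(t) = inf_{0≤u≤t} |κ + α(u)/2|`. -/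
theorem kernel_bound_purely_imaginary (T c : ℝ) (κ : ℂ) (hκ : κ = Complex.I * c
    ) (α : ℝ → ℂ) (hαc : ContinuousOn α (Set.Icc 0 T))
    (hne : ∀ τ ∈ Set.Icc (0:ℝ) T, κ + α τ / 2 ≠ 0)
    (Zp Zm : ℝ → ℂ)
    (hZp : ∀ s : ℝ, Zp s =
      Complex.exp (κ * s + (1 / 2) * ∫ u in (0:ℝ)..s, α u) / (κ + α s / 2) ^ ((1:ℂ) / 2))
    (hZm : ∀ s : ℝ, Zm s =
      Complex.exp (-(κ * s + (1 / 2) * ∫ u in (0:ℝ)..s, α u)) / (κ + α s / 2) ^ ((1:ℂ) / 2))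
    (K : ℝ → ℝ → ℂ)
    (hK : ∀ t τ : ℝ, K t τ = (1 / 2) * (Zp t * Zm τ - Zm t * Zp τ)) :
    ∀ t τ : ℝ, 0 ≤ τ → τ ≤ t → t ≤ T →
      ‖K t τ‖ ≤
        (sInf ((fun u => ‖κ + α u / 2‖) '' Set.Icc 0 t))⁻¹ *
          Real.exp ((1 / 2) * ∫ s in (0:ℝ)..t, ‖α s‖) *
          Real.exp (-(1 / 2) * ∫ s in (0:ℝ)..τ, ‖α s‖) := by
  intro t τ hτ0 hτt htT
  set g : ℝ → ℂ := fun u => κ + α u / 2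
  set lam := sInf ((fun u => ‖g u‖) '' Icc 0 t)
  have hsub : Icc 0 t ⊆ Icc 0 T := Icc_subset_Icc_right htT
  have hint : ∀ x ∈ Icc 0 T, IntervalIntegrable α volume 0 x := fun x hx =>
    (hαc.mono (uIcc_of_le hx.1 ▸ Icc_subset_Icc_right hx.2)).intervalIntegrable
  have hK_sinh : K t τ = sinh (phase κ α t - phase κ α τ) /
      (g t ^ ((1 : ℂ) / 2) * g τ ^ ((1 : ℂ) / 2)) := by
    rw [hK, hZp, hZm, hZp, hZm]
    exact half_mul_exp_div_sub_eq_sinh_div _ _ _ _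
  have hlam_pos : 0 < lam :=
    isCompact_Icc.sInf_image_pos (nonempty_Icc.2 (hτ0.trans hτt))
      (continuousOn_const.add ((hαc.mono hsub).div_const 2)).norm
      fun u hu => norm_pos_iff.2 (hne u (hsub hu))
  have hlam_le : ∀ u ∈ Icc 0 t, lam ≤ ‖g u‖ := fun u hu =>
    csInf_le ⟨0, by rintro _ ⟨v, -, rfl⟩; exact norm_nonneg _⟩ ⟨u, hu, rfl⟩
  have hre := abs_re_phase_sub_le c
    (hint τ ⟨hτ0, hτt.trans htT⟩) (hint t ⟨hτ0.trans hτt, htT⟩) hτt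
  rw [← hκ] at hre
  calc ‖K t τ‖
        = ‖sinh (phase κ α t - phase κ α τ)‖ / (√‖g t‖ * √‖g τ‖) := by
        rw [hK_sinh, norm_div, norm_mul, norm_cpow_one_half, norm_cpow_one_half]
    _ ≤ Real.exp |(phase κ α t - phase κ α τ).re| / lam :=
        div_le_div₀ (Real.exp_pos _).le (norm_sinh_le_exp_abs_re _) hlam_pos
          (le_sqrt_mul_sqrt_of_le hlam_pos.le (hlam_le t ⟨hτ0.trans hτt, le_rfl⟩)
            (hlam_le τ ⟨hτ0, hτt⟩))
    _ ≤ Real.exp ((1 / 2) *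
          ((∫ s in (0:ℝ)..t, ‖α s‖) - ∫ s in (0:ℝ)..τ, ‖α s‖)) / lam := by gcongr
    _ = _ := by
        rw [div_eq_inv_mul, mul_assoc, ← Real.exp_add]
        ring_nf
end

section
/- Horn's asymptotic Ansatz solves the modified equation exactly: let κ ∈ ℂ and let α : ℝ → ℂ be twice differentiable with κ + (1/2)α(t) lying in the slit plane ℂ ∖ (−∞,0] for all t in an open interval I. For σ = ±1 define Z_σ(t) := exp( σ( κ t + (1/2)∫₀ᵗ α(s) ds ) ) / ( κ + (1/2)α(t) )^{1/2}, using the principal complex square root. Then Z_σ is twice differentiable on I and satisfies Z_σ''(t) = ( κ² + κ α(t) + γ(t) ) Z_σ(t), where γ(t) := α(t)²/4 + 3 α'(t)² / ( 16 (κ + (1/2)α(t))² ) − α''(t) / ( 4 (κ + (1/2)α(t)) ). -/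
/-!
With `g = κ + α/2`, the Ansatz is `Z = exp(σ ∫ g) / √g`, whose logarithmic derivative is
`h = σ g - g'/(2g)`. Hence `Z'' = (h' + h²) Z`, and since `σ² = 1` the cross term `-σ g'` of `h²`
cancels the term `σ g'` of `h'`, leaving `g² + 3g'²/(4g²) - g''/(2g)`. Substituting `g' = α'/2`
and `g'' = α''/2` gives `κ² + κα + γ`.
-/

open Complex

section LogDeriv

variable {𝕜 𝕜' : Type*} [NontriviallyNormedField 𝕜] [NontriviallyNormedField 𝕜']
  [NormedAlgebra 𝕜 𝕜'] {x : 𝕜}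

theorem HasDerivAt.div_of_logDeriv {E W : 𝕜 → 𝕜'} {a b : 𝕜'}
    (hE : HasDerivAt E (a * E x) x) (hW : HasDerivAt W (b * W x) x) (hW0 : W x ≠ 0) :
    HasDerivAt (fun y => E y / W y) ((a - b) * (E x / W x)) x := by
  convert hE.fun_div hW hW0 using 1
  field_simp

theorem HasDerivAt.mul_of_logDeriv {h Z : 𝕜 → 𝕜'} {h' : 𝕜'}
    (hh : HasDerivAt h h' x) (hZ : HasDerivAt Z (h x * Z x) x) :
    HasDerivAt (fun y => h y * Z y) ((h' + h x ^ 2) * Z x) x := by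
  convert hh.fun_mul hZ using 1
  ring

end LogDeriv

theorem HasDerivAt.cpow_half {f : ℝ → ℂ} {f' : ℂ} {t : ℝ} (hf : HasDerivAt f f' t)
    (hslit : f t ∈ slitPlane) :
    HasDerivAt (fun s => f s ^ (1 / 2 : ℂ)) (f' / (2 * f t) * f t ^ (1 / 2 : ℂ)) t := by
  have hf0 := slitPlane_ne_zero hslit
  refine ((hasStrictDerivAt_cpow_const hslit).hasDerivAt.comp t hf).congr_deriv ?_
  rw [cpow_sub _ _ hf0, cpow_one]
  field_simp

theorem hasDerivAt_exp_div_cpow_half {Φ g : ℝ → ℂ} {g₁ σ : ℂ} {t : ℝ}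
    (hΦ : HasDerivAt Φ (g t) t) (hg : HasDerivAt g g₁ t) (hslit : g t ∈ slitPlane) :
    HasDerivAt (fun s => exp (σ * Φ s) / g s ^ (1 / 2 : ℂ))
      ((σ * g t - g₁ / (2 * g t)) * (exp (σ * Φ t) / g t ^ (1 / 2 : ℂ))) t :=
  ((hΦ.const_mul σ).cexp.congr_deriv (mul_comm _ _)).div_of_logDeriv (hg.cpow_half hslit)
    (by simp [slitPlane_ne_zero hslit])

theorem hasDerivAt_wkb_logDeriv_mul {g g₁ Z : ℝ → ℂ} {g₂ σ : ℂ} {t : ℝ} (hσ : σ ^ 2 = 1)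
    (hg : HasDerivAt g (g₁ t) t) (hg₁ : HasDerivAt g₁ g₂ t) (hg0 : g t ≠ 0)
    (hZ : HasDerivAt Z ((σ * g t - g₁ t / (2 * g t)) * Z t) t) :
    HasDerivAt (fun s => (σ * g s - g₁ s / (2 * g s)) * Z s)
      ((g t ^ 2 + 3 * g₁ t ^ 2 / (4 * g t ^ 2) - g₂ / (2 * g t)) * Z t) t := by
  have hh : HasDerivAt (fun s => σ * g s - g₁ s / (2 * g s)) _ t :=
    (hg.const_mul σ).sub (hg₁.fun_div (hg.const_mul 2) (mul_ne_zero two_ne_zero hg0))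
  refine (hh.mul_of_logDeriv hZ).congr_deriv ?_
  congr 1
  field_simp
  linear_combination (16 * g t ^ 4) * hσ

theorem horn_ansatz_solves_modified_equation_general (κ : ℂ) (α α' α'' : ℝ → ℂ)
    (hα : ∀ t : ℝ, HasDerivAt α (α' t) t) (hα' : ∀ t : ℝ, HasDerivAt α' (α'' t) t)
    (I : Set ℝ)
    (hslit : ∀ t ∈ I, κ + α t / 2 ∈ Complex.slitPlane)
    (σ : ℝ) (hσ : σ = 1 ∨ σ = -1)
    (Z : ℝ → ℂ)
    (hZ : ∀ t : ℝ, Z t =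
      Complex.exp ((σ : ℂ) * (κ * t + (1 / 2) * ∫ s in (0:ℝ)..t, α s)) /
        (κ + α t / 2) ^ ((1:ℂ) / 2)) :
    ∃ Z' Z'' : ℝ → ℂ,
      (∀ t ∈ I, HasDerivAt Z (Z' t) t) ∧
      (∀ t ∈ I, HasDerivAt Z' (Z'' t) t) ∧
      (∀ t ∈ I, Z'' t =
        (κ ^ 2 + κ * α t +
          (α t ^ 2 / 4 + 3 * α' t ^ 2 / (16 * (κ + α t / 2) ^ 2) -
            α'' t / (4 * (κ + α t / 2)))) * Z t) := by
  set g : ℝ → ℂ := fun t => κ + α t / 2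
  have hg : ∀ t, HasDerivAt g (α' t / 2) t := fun t => ((hα t).div_const 2).const_add κ
  have hαc : Continuous α := continuous_iff_continuousAt.2 fun t => (hα t).continuousAt
  have hΦ : ∀ t, HasDerivAt (fun u : ℝ => κ * u + 1 / 2 * ∫ s in (0:ℝ)..u, α s) (g t) t :=
    fun t => (((hasDerivAt_id t).ofReal_comp.const_mul κ).add
      ((hαc.integral_hasStrictDerivAt 0 t).hasDerivAt.const_mul (1 / 2))).congr_deriv
        (by simp only [g, ofReal_one]; ring)
  have hσ2 : (σ : ℂ) ^ 2 = 1 := by rcases hσ with rfl | rfl <;> norm_num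
  have hZ' : ∀ t ∈ I, HasDerivAt Z ((σ * g t - α' t / 2 / (2 * g t)) * Z t) t := fun t ht => by
    rw [show Z = _ from funext hZ]
    exact hasDerivAt_exp_div_cpow_half (hΦ t) (hg t) (hslit t ht)
  refine ⟨fun t => (σ * g t - α' t / 2 / (2 * g t)) * Z t, _, hZ', fun t ht => ?_, fun t _ => rfl⟩
  refine (hasDerivAt_wkb_logDeriv_mul hσ2 (hg t) ((hα' t).div_const 2)
    (slitPlane_ne_zero (hslit t ht)) (hZ' t ht)).congr_deriv ?_
  have hg_sq : g t ^ 2 = κ ^ 2 + κ * α t + α t ^ 2 / 4 := by simp only [g]; ring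
  change _ = (κ ^ 2 + κ * α t +
    (α t ^ 2 / 4 + 3 * α' t ^ 2 / (16 * g t ^ 2) - α'' t / (4 * g t))) * Z t
  generalize g t = x at hg_sq ⊢
  linear_combination Z t * hg_sq

/-- Horn's asymptotic Ansatz solves the modified equation exactly: for twice differentiable
`α` with `κ + α(t)/2` in the slit plane on an open interval `I`, the function
`Z_σ(t) = exp(σ(κt + (1/2)∫₀ᵗα)) / (κ + α(t)/2)^{1/2}` (σ = ±1) is twice differentiable
on `I` and satisfies `Z_σ'' = (κ² + κα + γ) Z_σ`, where
`γ = α²/4 + 3α'²/(16(κ+α/2)²) − α''/(4(κ+α/2))`. -/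
theorem horn_ansatz_solves_modified_equation (κ : ℂ) (α α' α'' : ℝ → ℂ)
    (hα : ∀ t : ℝ, HasDerivAt α (α' t) t) (hα' : ∀ t : ℝ, HasDerivAt α' (α'' t) t)
    (a b : ℝ) (I : Set ℝ) (hI : I = Set.Ioo a b)
    (hslit : ∀ t ∈ I, κ + α t / 2 ∈ Complex.slitPlane)
    (σ : ℝ) (hσ : σ = 1 ∨ σ = -1)
    (Z : ℝ → ℂ)
    (hZ : ∀ t : ℝ, Z t =
      Complex.exp ((σ : ℂ) * (κ * t + (1 / 2) * ∫ s in (0:ℝ)..t, α s)) /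
        (κ + α t / 2) ^ ((1:ℂ) / 2)) :
    ∃ Z' Z'' : ℝ → ℂ,
      (∀ t ∈ I, HasDerivAt Z (Z' t) t) ∧
      (∀ t ∈ I, HasDerivAt Z' (Z'' t) t) ∧
      (∀ t ∈ I, Z'' t =
        (κ ^ 2 + κ * α t +
          (α t ^ 2 / 4 + 3 * α' t ^ 2 / (16 * (κ + α t / 2) ^ 2) -
            α'' t / (4 * (κ + α t / 2)))) * Z t) :=
  horn_ansatz_solves_modified_equation_general κ α α' α'' hα hα' I hslit σ hσ Z hZ
end
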